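/- arXiv:math/9308215 — 8 statements merged into one kernel-verified Lean document; each statement's English description precedes it below -/
import Mathlib

section
/- If a graph G is the union of 𝔡 pairwise disjoint rays (where 𝔡 is the dominating number), then G is dominating. -/
open Filter Cardinal

/-- `f` is eventually dominated by `g`: `f n ≤ g n` for all but finitely many `n`. -/
def EvDom (f g : ℕ → ℕ) : Prop := ∀ᶠ n in Filter.atTop, f n ≤ g n

/-- A ray in `G`: an injective one-way infinite path. -/
def IsRay {X : Type} (G : SimpleGraph X) (R : ℕ → X) : Prop :=
  Function.Injective R ∧ ∀ n, G.Adj (R n) (R (n + 1))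

/-- A graph is dominating if some labelling makes the labels along rays a dominating family. -/
def DominatingGraph {X : Type} (G : SimpleGraph X) : Prop :=
  ∃ L : X → ℕ, ∀ f : ℕ → ℕ, ∃ R : ℕ → X, IsRay G R ∧ EvDom f (L ∘ R)

/-- `F` is a dominating family of functions. -/
def DomFamily (F : Set (ℕ → ℕ)) : Prop := ∀ g : ℕ → ℕ, ∃ f ∈ F, EvDom g f

/-- `F` is a bounded family of functions. -/
def BddFamily (F : Set (ℕ → ℕ)) : Prop := ∃ g : ℕ → ℕ, ∀ f ∈ F, EvDom f g

/-- The dominating number 𝔡. -/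
noncomputable def dNum : Cardinal := sInf {c | ∃ F : Set (ℕ → ℕ), DomFamily F ∧ #F = c}

/-- The bounding number 𝔟. -/
noncomputable def bNum : Cardinal := sInf {c | ∃ F : Set (ℕ → ℕ), ¬ BddFamily F ∧ #F = c}

/-- A branch vertex: one of countably infinite degree. -/
def BranchVtx {X : Type} (T : SimpleGraph X) (v : X) : Prop := #(T.neighborSet v) = ℵ₀

/-- `T` is a copy of `T_ω`: a tree all of whose vertices have countably infinite degree. -/
def IsTOmega {X : Type} (T : SimpleGraph X) : Prop :=
  T.IsTree ∧ ∀ v, BranchVtx T v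

/-- `T` is a subdivision of `T_ω`: a tree with all degrees 2 or ℵ₀ in which every ray
meets a branch vertex. -/
def IsSubdivTOmega {X : Type} (T : SimpleGraph X) : Prop :=
  T.IsTree ∧ (∀ v, #(T.neighborSet v) = 2 ∨ BranchVtx T v) ∧
    ∀ R : ℕ → X, IsRay T R → ∃ n, BranchVtx T (R n)

/-- `W` is a subdivided edge of `T` (from a branch vertex to a branch vertex, with
no branch vertices in its interior). -/
def SubdividedEdge {X : Type} (T : SimpleGraph X) {x y : X} (W : T.Walk x y) : Prop :=
  W.IsPath ∧ BranchVtx T x ∧ BranchVtx T y ∧ 0 < W.length ∧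
    ∀ v ∈ W.support, v ≠ x → v ≠ y → ¬ BranchVtx T v

/-- `T` is a uniform subdivision of `T_ω`: it has a root `r` such that at every branch
vertex `x`, all subdivided edges at `x` not towards `r` have the same length. -/
def UniformSubdivTOmega {X : Type} (T : SimpleGraph X) : Prop :=
  IsSubdivTOmega T ∧ ∃ r : X, BranchVtx T r ∧
    ∀ (x y z : X) (W : T.Walk x y) (W' : T.Walk x z),
      SubdividedEdge T W → SubdividedEdge T W' →
      (∀ P : T.Walk x r, P.IsPath → y ∉ P.support) →
      (∀ P : T.Walk x r, P.IsPath → z ∉ P.support) →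
      W.length = W'.length

/-- `Ps` is a family of disjoint paths starting at `x`: each member is a path from `x`,
and distinct members share no vertex other than `x`. -/
def DisjPathFam {X : Type} (G : SimpleGraph X) (x : X)
    (Ps : Set (Σ y : X, G.Walk x y)) : Prop :=
  (∀ P ∈ Ps, Sigma.snd P |>.IsPath) ∧
    ∀ P ∈ Ps, ∀ Q ∈ Ps, P ≠ Q →
      ∀ v, v ∈ (Sigma.snd P).support → v ∈ (Sigma.snd Q).support → v = x
/-- If a graph is the union of 𝔡 disjoint rays, then it is dominating. -/
theorem stmt1 {X : Type} (G : SimpleGraph X) (ι : Type) (hι : #ι = dNum)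
    (R : ι → ℕ → X) (hray : ∀ i, IsRay G (R i))
    (hdisj : Pairwise fun i j => Disjoint (Set.range (R i)) (Set.range (R j)))
    (hcover : ∀ x : X, ∃ i n, R i n = x)
    (hedges : ∀ x y : X, G.Adj x y →
      ∃ i n, (R i n = x ∧ R i (n + 1) = y) ∨ (R i n = y ∧ R i (n + 1) = x)) :
    DominatingGraph G := by
  classical
  obtain ⟨F, hF, hcard⟩ : ∃ F : Set (ℕ → ℕ), DomFamily F ∧ #F = dNum := by
    have hne : {c | ∃ F : Set (ℕ → ℕ), DomFamily F ∧ #F = c}.Nonempty :=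
      ⟨#(Set.univ : Set (ℕ → ℕ)),
        ⟨Set.univ, fun g => ⟨g, trivial, Filter.Eventually.of_forall fun n => le_rfl⟩, rfl⟩⟩
    obtain ⟨F, hF, hc⟩ := csInf_mem hne
    exact ⟨F, hF, hc⟩
  have hEq : #ι = #F := by rw [hι, hcard]
  obtain ⟨e⟩ := Cardinal.eq.mp hEq
  have hex : ∀ x : X, ∃ p : ι × ℕ, R p.1 p.2 = x := fun x => by
    obtain ⟨i, n, h⟩ := hcover x; exact ⟨(i, n), h⟩
  choose p hp using hex
  refine ⟨fun x => ((e (p x).1 : ℕ → ℕ)) (p x).2, fun f => ?_⟩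
  obtain ⟨f', hf'F, hdom⟩ := hF f
  set i := e.symm ⟨f', hf'F⟩ with hi
  refine ⟨R i, hray i, ?_⟩
  have key : ∀ n, ((e (p (R i n)).1 : ℕ → ℕ)) (p (R i n)).2 = f' n := by
    intro n
    have h1 : R (p (R i n)).1 (p (R i n)).2 = R i n := hp _
    have hij : (p (R i n)).1 = i := by
      by_contra hne
      exact (Set.disjoint_left.mp (hdisj hne) ⟨_, h1⟩) ⟨n, rfl⟩
    rw [hij] at h1 ⊢
    have hn : (p (R i n)).2 = n := (hray i).1 h1
    rw [hn, hi, Equiv.apply_symm_apply]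
  filter_upwards [hdom] with n hn
  simpa [Function.comp, key n] using hn
end

section
/- The tree T_ω in which every vertex has countably infinite degree is a dominating graph, witnessed by any injective labelling. -/
open Filter Cardinal

lemma exists_big_nbr {X : Type} (T : SimpleGraph X) (L : X → ℕ) (hL : Function.Injective L)
    (v : X) (hv : BranchVtx T v) (m : ℕ) : ∃ w, T.Adj v w ∧ m < L w := by
  have hinf : (T.neighborSet v).Infinite := by
    rw [← Set.infinite_coe_iff, Cardinal.infinite_iff]
    exact le_of_eq hv.symm
  have himg : (L '' T.neighborSet v).Infinite := hinf.image (Set.injOn_of_injective hL)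
  obtain ⟨b, hb, hmb⟩ := himg.exists_gt m
  obtain ⟨w, hw, rfl⟩ := hb
  exact ⟨w, hw, hmb⟩

/-- `T_ω` is dominating, witnessed by any injective labelling. -/
theorem stmt3 {X : Type} (T : SimpleGraph X) (hT : IsTOmega T)
    (L : X → ℕ) (hL : Function.Injective L) :
    ∀ f : ℕ → ℕ, ∃ R : ℕ → X, IsRay T R ∧ EvDom f (L ∘ R) := by
  intro f
  obtain ⟨v0⟩ : Nonempty X := hT.1.1.nonempty
  choose g hg1 hg2 using fun (v : X) (m : ℕ) => exists_big_nbr T L hL v (hT.2 v) m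
  set R : ℕ → X := fun n => Nat.rec v0 (fun n v => g v (max (L v) (f (n+1)))) n with hR
  have hstep : ∀ n, R (n+1) = g (R n) (max (L (R n)) (f (n+1))) := fun n => rfl
  have hadj : ∀ n, T.Adj (R n) (R (n+1)) := fun n => by
    rw [hstep]; exact hg1 _ _
  have hlt : ∀ n, max (L (R n)) (f (n+1)) < L (R (n+1)) := fun n => by
    rw [hstep]; exact hg2 _ _
  have hmono : StrictMono (L ∘ R) :=
    strictMono_nat_of_lt_succ fun n => lt_of_le_of_lt (le_max_left _ _) (hlt n)
  have hinj : Function.Injective R := fun a b h => hmono.injective (congrArg L h)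
  refine ⟨R, ⟨hinj, hadj⟩, ?_⟩
  rw [EvDom, Filter.eventually_atTop]
  refine ⟨1, fun n hn => ?_⟩
  obtain ⟨m, rfl⟩ := Nat.exists_eq_add_of_le' hn
  exact le_of_lt (lt_of_le_of_lt (le_max_right _ _) (hlt m))
end

section
/- There exists a subdivision of T_ω which is not a dominating graph. Specifically, if each edge e(n) of T_ω (under a fixed enumeration e : ω → E(T_ω)) is subdivided exactly n times, the resulting tree T is not dominating. -/
open Filter Cardinal

/-!
A ray in a rooted tree changes depth by one per step, so after `n` steps it has depth at most
`d + n ≤ 2n`, where `d` is its starting depth. If the number of subdivision vertices on the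
edges of `T_ω` tends to infinity (for instance, the edge with code `n` is subdivided `n` times),
only finitely many branch vertices have depth `≤ 2n`, while every ray visits branch vertices
infinitely often. So any labelling `L` is beaten at those times by
`f n = 1 + max {L v | v a branch vertex of depth ≤ 2n}`.
-/

theorem not_dominatingGraph_of_frequently_mem {X : Type} {G : SimpleGraph X}
    (S : ℕ → Set X) (hS : ∀ n, (S n).Finite)
    (hR : ∀ R, IsRay G R → ∃ᶠ n in atTop, R n ∈ S n) : ¬ DominatingGraph G := by
  rintro ⟨L, hL⟩
  obtain ⟨R, hRay, hdom⟩ := hL fun n => (hS n).toFinset.sup L + 1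
  obtain ⟨n, hmem, hle⟩ := ((hR R hRay).and_eventually hdom).exists
  have := Finset.le_sup (f := L) ((hS n).mem_toFinset.2 hmem)
  simp only [Function.comp_apply] at hle
  omega

section ParentMap

open SimpleGraph

variable {V : Type*} {parent : V → V} {root : V} {depth : V → ℕ} {v w : V}

def parentGraph (parent : V → V) : SimpleGraph V :=
  fromRel fun v w => parent v = w

theorem parentGraph_adj :
    (parentGraph parent).Adj v w ↔ v ≠ w ∧ (parent v = w ∨ parent w = v) :=
  fromRel_adj _ _ _

structure IsRootedDepth (parent : V → V) (root : V) (depth : V → ℕ) : Prop where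
  parent_root : parent root = root
  depth_parent : ∀ v ≠ root, depth (parent v) + 1 = depth v

namespace IsRootedDepth

theorem parent_ne (h : IsRootedDepth parent root depth) (hv : v ≠ root) : parent v ≠ v := by
  intro he
  have := h.depth_parent v hv
  rw [he] at this
  omega

theorem ne_root_of_parent_eq (h : IsRootedDepth parent root depth) (hvw : v ≠ w)
    (he : parent v = w) : v ≠ root := by
  rintro rfl
  exact hvw (h.parent_root ▸ he)

theorem parent_parent_ne (h : IsRootedDepth parent root depth) (hv : v ≠ root) :
    parent (parent v) ≠ v := by
  intro he
  have h₁ := h.depth_parent v hv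
  have h₂ := h.depth_parent (parent v) (h.ne_root_of_parent_eq (h.parent_ne hv) he)
  rw [he] at h₂
  omega

theorem adj_parent (h : IsRootedDepth parent root depth) (hv : v ≠ root) :
    (parentGraph parent).Adj v (parent v) :=
  parentGraph_adj.2 ⟨(h.parent_ne hv).symm, Or.inl rfl⟩

theorem adj_cases (h : IsRootedDepth parent root depth) (hvw : (parentGraph parent).Adj v w) :
    parent v = w ∧ depth w + 1 = depth v ∨ parent w = v ∧ depth v + 1 = depth w := by
  obtain ⟨hne, he | he⟩ := parentGraph_adj.1 hvw
  · exact Or.inl ⟨he, he ▸ h.depth_parent v (h.ne_root_of_parent_eq hne he)⟩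
  · exact Or.inr ⟨he, he ▸ h.depth_parent w (h.ne_root_of_parent_eq hne.symm he)⟩

theorem depth_le_of_adj (h : IsRootedDepth parent root depth)
    (hvw : (parentGraph parent).Adj v w) : depth w ≤ depth v + 1 := by
  rcases h.adj_cases hvw with ⟨-, hd⟩ | ⟨-, hd⟩ <;> omega

theorem parent_eq_of_adj_of_depth_le (h : IsRootedDepth parent root depth)
    (hvw : (parentGraph parent).Adj v w) (hle : depth w ≤ depth v) : parent v = w := by
  rcases h.adj_cases hvw with ⟨he, -⟩ | ⟨-, hd⟩
  · exact he
  · omega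

theorem reachable_root (h : IsRootedDepth parent root depth) (v : V) :
    (parentGraph parent).Reachable v root := by
  induction hd : depth v using Nat.strong_induction_on generalizing v with
  | _ n ih =>
    by_cases hv : v = root
    · exact hv ▸ .rfl
    · have := h.depth_parent v hv
      exact (h.adj_parent hv).reachable.trans (ih _ (by omega) _ rfl)

theorem connected (h : IsRootedDepth parent root depth) : (parentGraph parent).Connected :=
  (connected_iff _).2
    ⟨fun u v => (h.reachable_root u).trans (h.reachable_root v).symm, ⟨root⟩⟩

/-- At a vertex of maximal depth on a cycle, both cycle-neighbours would have to be its
parent. -/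
theorem isAcyclic (h : IsRootedDepth parent root depth) : (parentGraph parent).IsAcyclic := by
  classical
  intro v c hc
  obtain ⟨u, hu, hmax⟩ := c.support.toFinset.exists_max_image depth
    ⟨v, List.mem_toFinset.2 c.start_mem_support⟩
  rw [List.mem_toFinset] at hu
  have hc' := hc.rotate hu
  have to_parent : ∀ w ∈ (c.rotate u hu).support, (parentGraph parent).Adj u w →
      w = parent u := fun w hw hadj =>
    (h.parent_eq_of_adj_of_depth_le hadj
      (hmax w (List.mem_toFinset.2 ((c.mem_support_rotate_iff u hu).1 hw)))).symm
  exact hc'.snd_ne_penultimate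
    ((to_parent _ (Walk.getVert_mem_support _ _) (Walk.adj_snd hc'.not_nil)).trans
      (to_parent _ (Walk.getVert_mem_support _ _) (Walk.adj_penultimate hc'.not_nil).symm).symm)

theorem isTree (h : IsRootedDepth parent root depth) : (parentGraph parent).IsTree :=
  ⟨h.connected, h.isAcyclic⟩

theorem depth_le_add (h : IsRootedDepth parent root depth) {R : ℕ → V}
    (hR : ∀ n, (parentGraph parent).Adj (R n) (R (n + 1))) (n : ℕ) :
    depth (R n) ≤ depth (R 0) + n := by
  induction n with
  | zero => rfl
  | succ n ih =>
    have := h.depth_le_of_adj (hR n)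
    omega

end IsRootedDepth

end ParentMap

namespace SubdivTree

variable (ℓ : List ℕ → ℕ)

def edgeLen : List ℕ → ℕ
  | [] => 1
  | k :: s => ℓ (k :: s) + 1

theorem edgeLen_pos : ∀ s, 0 < edgeLen ℓ s
  | [] => Nat.one_pos
  | _ :: _ => Nat.succ_pos _

/-- The vertices of the subdivision of `T_ω` in which the edge from the branch vertex `s.tail`
to its child `s` (the children of `s` being the lists `k :: s`) carries `ℓ s` subdivision
vertices: `(s, j)` lies at distance `j` above the branch vertex `s` on that edge. -/
abbrev Vtx : Type := {p : List ℕ × ℕ // p.2 < edgeLen ℓ p.1}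

def node (s : List ℕ) : Vtx ℓ := ⟨(s, 0), edgeLen_pos ℓ s⟩

def root : Vtx ℓ := node ℓ []

def parent (p : Vtx ℓ) : Vtx ℓ :=
  if h : p.1.2 + 1 < edgeLen ℓ p.1.1 then ⟨(p.1.1, p.1.2 + 1), h⟩ else node ℓ p.1.1.tail

def branchDepth : List ℕ → ℕ
  | [] => 0
  | k :: s => branchDepth s + edgeLen ℓ (k :: s)

def depth (p : Vtx ℓ) : ℕ := branchDepth ℓ p.1.1 - p.1.2

theorem isRootedDepth : IsRootedDepth (parent ℓ) (root ℓ) (depth ℓ) where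
  parent_root := rfl
  depth_parent := by
    rintro ⟨⟨_ | ⟨k, s⟩, j⟩, hj⟩ hp
    · simp only [edgeLen, Nat.lt_one_iff] at hj
      exact absurd (by subst hj; rfl) hp
    · simp only [edgeLen] at hj
      unfold parent
      split_ifs with h <;>
        simp only [depth, node, branchDepth, edgeLen, List.tail_cons] at h ⊢ <;> omega

def lower (p : Vtx ℓ) : Vtx ℓ := ⟨(p.1.1, p.1.2 - 1), lt_of_le_of_lt (Nat.sub_le _ _) p.2⟩

def edgeTop (s : List ℕ) (k : ℕ) : Vtx ℓ := ⟨(k :: s, ℓ (k :: s)), Nat.lt_succ_self _⟩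

variable {ℓ}

theorem parent_eq_iff {p q : Vtx ℓ} (hp : p.1.2 ≠ 0) :
    parent ℓ q = p ↔ q = lower ℓ p := by
  obtain ⟨⟨s, j⟩, hj⟩ := p
  obtain ⟨⟨t, i⟩, hi⟩ := q
  simp only [ne_eq] at hp hi hj
  unfold parent lower
  split_ifs with h <;> simp only [node, Subtype.mk.injEq, Prod.mk.injEq] at h ⊢
  · constructor <;> rintro ⟨rfl, _⟩ <;> exact ⟨rfl, by omega⟩
  · constructor
    · rintro ⟨-, rfl⟩
      exact absurd rfl hp
    · rintro ⟨rfl, rfl⟩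
      omega

theorem fst_parent {p : Vtx ℓ} (hp : (parent ℓ p).1.2 ≠ 0) : (parent ℓ p).1.1 = p.1.1 := by
  unfold parent at hp ⊢
  split_ifs at hp ⊢
  · rfl
  · exact absurd rfl hp

theorem parent_edgeTop (s : List ℕ) (k : ℕ) : parent ℓ (edgeTop ℓ s k) = node ℓ s := by
  simp [parent, edgeTop, edgeLen]

theorem node_fst {p : Vtx ℓ} (hp : p.1.2 = 0) : node ℓ p.1.1 = p :=
  Subtype.ext (Prod.ext rfl hp.symm)

theorem depth_node (s : List ℕ) : depth ℓ (node ℓ s) = branchDepth ℓ s := rfl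

theorem ne_root_of_snd_ne_zero {p : Vtx ℓ} (hp : p.1.2 ≠ 0) : p ≠ root ℓ := by
  rintro rfl
  exact hp rfl

theorem neighborSet_of_snd_ne_zero {p : Vtx ℓ} (hp : p.1.2 ≠ 0) :
    (parentGraph (parent ℓ)).neighborSet p = {lower ℓ p, parent ℓ p} := by
  ext q
  rw [SimpleGraph.mem_neighborSet, parentGraph_adj, Set.mem_insert_iff, Set.mem_singleton_iff,
    ← parent_eq_iff hp]
  constructor
  · rintro ⟨-, he | he⟩
    · exact Or.inr he.symm
    · exact Or.inl he
  · rintro (he | rfl)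
    · refine ⟨?_, Or.inr he⟩
      rintro rfl
      exact (isRootedDepth ℓ).parent_ne (ne_root_of_snd_ne_zero hp) he
    · exact parentGraph_adj.1 ((isRootedDepth ℓ).adj_parent (ne_root_of_snd_ne_zero hp))

theorem card_neighborSet_of_snd_ne_zero {p : Vtx ℓ} (hp : p.1.2 ≠ 0) :
    #((parentGraph (parent ℓ)).neighborSet p) = 2 := by
  have hne : lower ℓ p ≠ parent ℓ p := fun he =>
    (isRootedDepth ℓ).parent_parent_ne (ne_root_of_snd_ne_zero hp)
      (he ▸ (parent_eq_iff hp).2 rfl)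
  rw [neighborSet_of_snd_ne_zero hp, mk_insert (by simpa using hne), mk_singleton]
  norm_num

theorem card_neighborSet_node (s : List ℕ) :
    #((parentGraph (parent ℓ)).neighborSet (node ℓ s)) = ℵ₀ := by
  have hadj (k : ℕ) : (parentGraph (parent ℓ)).Adj (node ℓ s) (edgeTop ℓ s k) := by
    refine parentGraph_adj.2 ⟨fun he => ?_, Or.inr (parent_edgeTop s k)⟩
    simpa [node, edgeTop] using congrArg (fun p : Vtx ℓ => p.1.1.length) he
  have : Infinite ((parentGraph (parent ℓ)).neighborSet (node ℓ s)) :=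
    Infinite.of_injective (fun k => ⟨edgeTop ℓ s k, hadj k⟩) fun k k' he => by
      simpa [edgeTop] using congrArg (fun p : Vtx ℓ => p.1.1) (Subtype.ext_iff.1 he)
  exact mk_eq_aleph0 _

theorem branchVtx_iff {p : Vtx ℓ} : BranchVtx (parentGraph (parent ℓ)) p ↔ p.1.2 = 0 := by
  refine ⟨fun hp => by_contra fun h0 => ?_, fun hp => node_fst hp ▸ card_neighborSet_node _⟩
  rw [BranchVtx, card_neighborSet_of_snd_ne_zero h0] at hp
  exact (ofNat_lt_aleph0 : (2 : Cardinal) < ℵ₀).ne hp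

theorem fst_eq_of_adj {p q : Vtx ℓ} (hpq : (parentGraph (parent ℓ)).Adj p q)
    (hp : p.1.2 ≠ 0) (hq : q.1.2 ≠ 0) : p.1.1 = q.1.1 := by
  rcases (parentGraph_adj.1 hpq).2 with rfl | rfl
  · exact (fst_parent hq).symm
  · exact fst_parent hp

/-- An injective ray cannot stay forever among the finitely many interior vertices of one
subdivided edge. -/
theorem frequently_snd_eq_zero {R : ℕ → Vtx ℓ} (hR : IsRay (parentGraph (parent ℓ)) R) :
    ∃ᶠ n in atTop, (R n).1.2 = 0 := by
  rw [Filter.Frequently, eventually_atTop]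
  rintro ⟨N, hN⟩
  have hfst (n : ℕ) : (R (N + n)).1.1 = (R N).1.1 := by
    induction n with
    | zero => rfl
    | succ n ih =>
      rw [← ih]
      exact (fst_eq_of_adj (hR.2 (N + n)) (hN _ (by omega)) (hN _ (by omega))).symm
  have hinj : Function.Injective fun n => (R (N + n)).1.2 := fun m n he =>
    Nat.add_left_cancel (hR.1 (Subtype.ext (Prod.ext ((hfst m).trans (hfst n).symm) he)))
  refine (Set.finite_Iio (edgeLen ℓ (R N).1.1)).not_infinite
    (Set.infinite_of_injective_forall_mem hinj fun n => ?_)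
  simpa [hfst n] using (R (N + n)).2

theorem isSubdivTOmega (ℓ : List ℕ → ℕ) : IsSubdivTOmega (parentGraph (parent ℓ)) := by
  refine ⟨(isRootedDepth ℓ).isTree, fun v => ?_, fun R hR => ?_⟩
  · by_cases hv : v.1.2 = 0
    · exact Or.inr (branchVtx_iff.2 hv)
    · exact Or.inl (card_neighborSet_of_snd_ne_zero hv)
  · obtain ⟨n, hn⟩ := (frequently_snd_eq_zero hR).exists
    exact ⟨n, branchVtx_iff.2 hn⟩

theorem finite_setOf_branchDepth_le (hℓ : Tendsto ℓ cofinite atTop) (m : ℕ) :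
    {s | branchDepth ℓ s ≤ m}.Finite := by
  refine ((eventually_cofinite.1 (hℓ.eventually_gt_atTop m)).insert []).subset ?_
  rintro (_ | ⟨k, s⟩) hs
  · exact Set.mem_insert _ _
  · simp only [Set.mem_ofPred_eq, branchDepth, edgeLen] at hs
    exact Or.inr (by simp only [Set.mem_ofPred_eq]; omega)

theorem not_dominatingGraph (hℓ : Tendsto ℓ cofinite atTop) :
    ¬ DominatingGraph (parentGraph (parent ℓ)) := by
  refine not_dominatingGraph_of_frequently_mem
    (fun n => node ℓ '' {s | branchDepth ℓ s ≤ 2 * n})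
    (fun n => (finite_setOf_branchDepth_le hℓ _).image _) fun R hR => ?_
  have hdepth : ∀ᶠ n in atTop, depth ℓ (R n) ≤ 2 * n :=
    (eventually_ge_atTop (depth ℓ (R 0))).mono fun n hn => by
      have := (isRootedDepth ℓ).depth_le_add hR.2 n
      omega
  refine ((frequently_snd_eq_zero hR).and_eventually hdepth).mono fun n ⟨h0, hn⟩ => ?_
  rw [← node_fst h0, depth_node] at hn
  exact ⟨_, hn, node_fst h0⟩

end SubdivTree

/-- There exists a subdivision of `T_ω` which is not a dominating graph. -/
theorem stmt4 : ∃ (X : Type) (T : SimpleGraph X), IsSubdivTOmega T ∧ ¬ DominatingGraph T := by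
  have encode_tendsto : Tendsto (Encodable.encode : List ℕ → ℕ) cofinite atTop :=
    Nat.cofinite_eq_atTop ▸ Encodable.encode_injective.tendsto_cofinite
  exact ⟨_, _, SubdivTree.isSubdivTOmega _, SubdivTree.not_dominatingGraph encode_tendsto⟩
end

section
/- Every uniform subdivision of T_ω is a dominating graph; moreover any injective labelling witnesses this. -/
open Filter Cardinal

/-! The ray is built greedily from the root `r`, one subdivided edge at a time. At a branch
vertex `x` reached by a path `p`, infinitely many neighbours of `x` lie off `p`, and each starts
a subdivided edge leading away from `r`. In a tree these edges meet only at `x`, and by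
uniformity they all have the same length `ℓ`, known before the edge is chosen. As `L` is
injective, only finitely many vertices have a label below `max_{m ≤ |p| + ℓ} f m`, so one of
these edges carries no such label; appending it keeps `f m ≤ L (R m)` for all `m ≥ 1`. -/

open Function SimpleGraph Walk

namespace SimpleGraph

variable {V : Type} {G : SimpleGraph V}

lemma Walk.IsPath.append_of_forall_mem_support {u v w : V} {p : G.Walk u v} {q : G.Walk v w}
    (hp : p.IsPath) (hq : q.IsPath) (h : ∀ x ∈ p.support, x ∈ q.support → x = v) :
    (p.append q).IsPath := by
  rw [isPath_def, support_append]
  refine hp.support_nodup.append hq.support_nodup.tail fun x hxp hxq => ?_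
  have hvq : v ∉ q.support.tail := by
    have := hq.support_nodup
    rw [← cons_tail_support, List.nodup_cons] at this
    exact this.1
  exact hvq (h x hxp (List.mem_of_mem_tail hxq) ▸ hxq)

lemma IsAcyclic.isPath_append_of_ne_penultimate (hG : G.IsAcyclic) {u v w : V}
    {p : G.Walk u v} (hp : p.IsPath) (hvw : G.Adj v w) (hw : w ≠ p.penultimate) :
    (p.append (cons hvw nil)).IsPath := by
  rw [← concat_eq_append]
  exact hp.concat (fun hmem => hw (hG.eq_penultimate_of_adj_end hp hvw hmem)) hvw

lemma IsAcyclic.eq_of_mem_support_of_snd_ne (hG : G.IsAcyclic) {u v w x : V}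
    {p : G.Walk u v} {q : G.Walk u w} (hp : p.IsPath) (hq : q.IsPath) (hsnd : p.snd ≠ q.snd)
    (hxp : x ∈ p.support) (hxq : x ∈ q.support) : x = u := by
  classical
  by_contra hx
  apply hsnd
  rw [← snd_takeUntil hx p hxp, ← snd_takeUntil hx q hxq]
  exact congrArg (fun P : G.Path u x => P.1.snd)
    ((hG.subsingleton_path u x).elim ⟨_, hp.takeUntil hxp⟩ ⟨_, hq.takeUntil hxq⟩)

lemma isRay_getVert_diag {r : V} (F : ℕ → Σ y, G.Walk r y) (hpath : ∀ n, (F n).2.IsPath)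
    (hlen : ∀ n, n ≤ (F n).2.length)
    (hprefix : ∀ i j, i ≤ j → ∀ m ≤ (F i).2.length,
      (F j).2.getVert m = (F i).2.getVert m) :
    IsRay G fun n => (F n).2.getVert n := by
  refine ⟨fun a b hab => ?_, fun n => ?_⟩
  · wlog hle : a ≤ b generalizing a b
    · exact (this b a hab.symm (le_of_not_ge hle)).symm
    refine (hpath b).getVert_injOn (le_trans hle (hlen b)) (hlen b) ?_
    simpa only [hprefix a b hle a (hlen a)] using hab
  · show G.Adj ((F n).2.getVert n) ((F (n + 1)).2.getVert (n + 1))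
    rw [← hprefix n (n + 1) n.le_succ n (hlen n)]
    exact adj_getVert_succ _ (hlen (n + 1))

theorem exists_isRay_of_forall_exists_append {r y₀ : V} (P : ∀ y, G.Walk r y → Prop)
    (p₀ : G.Walk r y₀) (h₀ : P y₀ p₀) (hpath : ∀ y (p : G.Walk r y), P y p → p.IsPath)
    (hext : ∀ y (p : G.Walk r y), P y p →
      ∃ (z : V) (q : G.Walk y z), 0 < q.length ∧ P z (p.append q)) :
    ∃ R : ℕ → V, IsRay G R ∧
      ∀ n, ∃ (y : V) (p : G.Walk r y), P y p ∧ n ≤ p.length ∧ p.getVert n = R n := by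
  have hnext : ∀ s : Σ y, G.Walk r y, ∃ t : Σ z, G.Walk s.1 z,
      P s.1 s.2 → 0 < t.2.length ∧ P t.1 (s.2.append t.2) := fun ⟨y, p⟩ => by
    by_cases hp : P y p
    · obtain ⟨z, q, hq⟩ := hext y p hp
      exact ⟨⟨z, q⟩, fun _ => hq⟩
    · exact ⟨⟨y, nil⟩, fun h => absurd h hp⟩
  choose next hnext using hnext
  let F : ℕ → Σ y, G.Walk r y := fun n =>
    Nat.rec ⟨y₀, p₀⟩ (fun _ s => ⟨(next s).1, s.2.append (next s).2⟩) n
  have hF : ∀ n, P (F n).1 (F n).2 ∧ n ≤ (F n).2.length := by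
    intro n
    induction n with
    | zero => exact ⟨h₀, Nat.zero_le _⟩
    | succ n ih =>
      obtain ⟨hpos, hP⟩ := hnext (F n) ih.1
      refine ⟨hP, ?_⟩
      simp only [F, length_append]
      lia
  have hmono : Monotone fun n => (F n).2.length :=
    monotone_nat_of_le_succ fun n => (length_append _ _).symm ▸ Nat.le_add_right _ _
  have hprefix : ∀ i j, i ≤ j → ∀ m ≤ (F i).2.length,
      (F j).2.getVert m = (F i).2.getVert m := by
    intro i j hij
    induction j, hij using Nat.le_induction with
    | base => exact fun _ _ => rfl
    | succ j hij ih =>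
      intro m hm
      show ((F j).2.append (next (F j)).2).getVert m = _
      rw [getVert_append', if_pos (hm.trans (hmono hij)), ih m hm]
  exact ⟨_, isRay_getVert_diag F (fun n => hpath _ _ (hF n).1) (fun n => (hF n).2) hprefix,
    fun n => ⟨_, (F n).2, (hF n).1, (hF n).2, rfl⟩⟩

end SimpleGraph

lemma exists_forall_le_of_pairwise_disjoint {ι α : Type*} [Infinite ι] {A : ι → Set α}
    (hA : Pairwise (Disjoint on A)) {L : α → ℕ} (hL : Injective L) (B : ℕ) :
    ∃ i, ∀ v ∈ A i, B ≤ L v := by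
  by_contra! h
  choose g hgA hgB using h
  have : Finite {v | L v < B} := ((Set.finite_Iio B).preimage hL.injOn).to_subtype
  have : Finite ι :=
    Finite.of_injective (fun i => (⟨g i, hgB i⟩ : {v | L v < B})) fun i j hij => by
      have hg : g i = g j := congrArg Subtype.val hij
      exact hA.eq <| Set.not_disjoint_iff.2 ⟨g i, hgA i, hg ▸ hgA j⟩
  exact not_finite ι

section Subdivision

variable {X : Type} {T : SimpleGraph X}

/-- The clause of `UniformSubdivTOmega` that makes `r` a root. -/
def IsUniformRoot (T : SimpleGraph X) (r : X) : Prop :=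
  ∀ (x y z : X) (W : T.Walk x y) (W' : T.Walk x z),
    SubdividedEdge T W → SubdividedEdge T W' →
    (∀ P : T.Walk x r, P.IsPath → y ∉ P.support) →
    (∀ P : T.Walk x r, P.IsPath → z ∉ P.support) →
    W.length = W'.length

lemma SubdividedEdge.ne {x y : X} {W : T.Walk x y} (hW : SubdividedEdge T W) : y ≠ x := by
  rintro rfl
  exact (isPath_iff_nil.mp hW.1).length_eq_zero.not_gt hW.2.2.2.1

lemma IsSubdivTOmega.exists_adj_ne (hT : IsSubdivTOmega T) (v w : X) :
    ∃ z, T.Adj v z ∧ z ≠ w := by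
  have h1 : 1 < #(T.neighborSet v) := by
    rcases hT.2.1 v with h | h <;> rw [h]
    · exact one_lt_two
    · exact one_lt_aleph0
  obtain ⟨z, hz, hzw⟩ := (Set.nontrivial_coe_sort.mp (one_lt_iff_nontrivial.mp h1)).exists_ne w
  exact ⟨z, hz, hzw⟩

lemma IsSubdivTOmega.exists_subdividedEdge_snd_eq (hT : IsSubdivTOmega T) {x u : X}
    (hx : BranchVtx T x) (hxu : T.Adj x u) :
    ∃ (y : X) (W : T.Walk x y), SubdividedEdge T W ∧ W.snd = u := by
  -- Otherwise the walk from `x` through `u` along vertices of degree 2 never stops,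
  -- giving a ray without branch vertices.
  by_contra! hno
  let P : ∀ y, T.Walk x y → Prop := fun _ q =>
    q.IsPath ∧ 0 < q.length ∧ q.snd = u ∧ ∀ v ∈ q.support, v ≠ x → ¬BranchVtx T v
  have hP : ∀ y (q : T.Walk x y), q.IsPath → 0 < q.length → q.snd = u →
      (∀ v ∈ q.support, v ≠ x → v ≠ y → ¬BranchVtx T v) → P y q := by
    intro y q hq hpos hsnd hint
    refine ⟨hq, hpos, hsnd, fun v hv hvx => ?_⟩
    by_cases hvy : v = y
    · subst hvy
      exact fun hy => hno v q ⟨hq, hx, hy, hpos, hint⟩ hsnd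
    · exact hint v hv hvx hvy
  have hext : ∀ y (q : T.Walk x y), P y q →
      ∃ (z : X) (q' : T.Walk y z), 0 < q'.length ∧ P z (q.append q') := by
    rintro y q ⟨hq, hpos, hsnd, hint⟩
    obtain ⟨z, hyz, hz⟩ := hT.exists_adj_ne y q.penultimate
    refine ⟨z, cons hyz nil, Nat.zero_lt_one, hP z _
      (hT.1.isAcyclic.isPath_append_of_ne_penultimate hq hyz hz) (by simp) ?_ ?_⟩
    · show (q.append _).getVert 1 = u
      rwa [getVert_append', if_pos (Nat.one_le_iff_ne_zero.mpr hpos.ne')]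
    · intro v hv hvx hvz
      rw [mem_support_append_iff] at hv
      rcases hv with hv | hv
      · exact hint v hv hvx
      · simp only [support_cons, support_nil, List.mem_cons, List.not_mem_nil, or_false] at hv
        rcases hv with rfl | rfl
        exacts [hint v (end_mem_support q) hvx, absurd rfl hvz]
  have hstart : P u (cons hxu nil) := hP u _ (by simp [hxu.ne]) (by simp) rfl
    fun v hv hvx hvu => by simp [hvx, hvu] at hv
  obtain ⟨R, hR, hRP⟩ := exists_isRay_of_forall_exists_append P _ hstart (fun _ _ h => h.1) hext
  obtain ⟨n, hn⟩ := hT.2.2 (fun n => R (n + 1))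
    ⟨hR.1.comp (add_left_injective 1), fun n => hR.2 (n + 1)⟩
  obtain ⟨y, q, ⟨hq, -, -, hint⟩, hlen, hqR⟩ := hRP (n + 1)
  refine hint _ (getVert_mem_support q _) ?_ (hqR ▸ hn)
  rw [Ne, hq.getVert_eq_start_iff hlen]
  lia

lemma IsSubdivTOmega.exists_subdividedEdge_away (hT : IsSubdivTOmega T) {r x u : X}
    (hx : BranchVtx T x) (p : T.Walk r x) (hp : p.IsPath) (hxu : T.Adj x u)
    (hu : u ∉ p.support) :
    ∃ (y : X) (W : T.Walk x y), SubdividedEdge T W ∧ W.snd = u ∧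
      ∀ v ∈ W.support, v ∈ p.support → v = x := by
  obtain ⟨y, W, hW, hsnd⟩ := hT.exists_subdividedEdge_snd_eq hx hxu
  refine ⟨y, W, hW, hsnd, fun v hvW hvp => ?_⟩
  have hmem : ∀ v, v ∈ p.reverse.support ↔ v ∈ p.support := by
    simp only [support_reverse, List.mem_reverse, implies_true]
  refine hT.1.isAcyclic.eq_of_mem_support_of_snd_ne hW.1 hp.reverse ?_ hvW ((hmem v).2 hvp)
  rw [hsnd]
  exact fun h => hu (h ▸ (hmem _).1 (getVert_mem_support _ _))

lemma IsSubdivTOmega.exists_subdividedEdge_labels_ge (hT : IsSubdivTOmega T) {r x : X}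
    (hr : IsUniformRoot T r) {L : X → ℕ} (hL : Injective L) (hx : BranchVtx T x)
    (p : T.Walk r x) (hp : p.IsPath) (C : ℕ → ℕ) :
    ∃ (y : X) (W : T.Walk x y), SubdividedEdge T W ∧
      ∀ v ∈ W.support, v ≠ x → v ∉ p.support ∧ C W.length ≤ L v := by
  let U : Set X := T.neighborSet x \ {v | v ∈ p.support}
  have : Infinite U := ((Set.infinite_coe_iff.mp (Cardinal.infinite_iff.mpr hx.ge)).sdiff
    p.support.finite_toSet).to_subtype
  choose y W hW hsnd hWp using fun u : U => hT.exists_subdividedEdge_away hx p hp u.2.1 u.2.2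
  have havoid : ∀ u, ∀ v ∈ (W u).support, v ≠ x → v ∉ p.support :=
    fun u v hv hvx hvp => hvx (hWp u v hv hvp)
  have hy : ∀ u, ∀ P : T.Walk x r, P.IsPath → y u ∉ P.support := by
    intro u P hP
    rw [(hT.1.existsUnique_path x r).unique hP hp.reverse, support_reverse, List.mem_reverse]
    exact havoid u _ (end_mem_support _) (hW u).ne
  have hdisj : Pairwise (Disjoint on fun u => {v | v ∈ (W u).support ∧ v ≠ x}) := by
    refine fun u u' huu' => Set.disjoint_left.2 fun v hv hv' => hv.2 ?_
    refine hT.1.isAcyclic.eq_of_mem_support_of_snd_ne (hW u).1 (hW u').1 ?_ hv.1 hv'.1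
    rw [hsnd, hsnd]
    exact Subtype.coe_ne_coe.2 huu'
  obtain ⟨u₀⟩ := (inferInstance : Nonempty U)
  obtain ⟨u, hu⟩ := exists_forall_le_of_pairwise_disjoint hdisj hL (C (W u₀).length)
  have hlen : (W u).length = (W u₀).length := hr x _ _ _ _ (hW u) (hW u₀) (hy u) (hy u₀)
  exact ⟨y u, W u, hW u, fun v hv hvx => ⟨havoid u v hv hvx, hlen ▸ hu v ⟨hv, hvx⟩⟩⟩

lemma IsSubdivTOmega.exists_append_labels_ge (hT : IsSubdivTOmega T) {r x : X}
    (hr : IsUniformRoot T r) {L : X → ℕ} (hL : Injective L) (f : ℕ → ℕ)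
    (hx : BranchVtx T x) (p : T.Walk r x) (hp : p.IsPath)
    (hpf : ∀ m, 1 ≤ m → m ≤ p.length → f m ≤ L (p.getVert m)) :
    ∃ (y : X) (W : T.Walk x y), 0 < W.length ∧ (p.append W).IsPath ∧ BranchVtx T y ∧
      ∀ m, 1 ≤ m → m ≤ (p.append W).length → f m ≤ L ((p.append W).getVert m) := by
  obtain ⟨y, W, hW, hWp⟩ := hT.exists_subdividedEdge_labels_ge hr hL hx p hp
    fun k => (Finset.range (p.length + k + 1)).sup f
  refine ⟨y, W, hW.2.2.2.1, hp.append_of_forall_mem_support hW.1 fun v hvp hvW =>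
    by_contra fun hvx => (hWp v hvW hvx).1 hvp, hW.2.2.1, fun m hm1 hm => ?_⟩
  rw [length_append] at hm
  rw [getVert_append']
  split_ifs with hmp
  · exact hpf m hm1 hmp
  · have hvx : W.getVert (m - p.length) ≠ x := by
      rw [Ne, hW.1.getVert_eq_start_iff (by lia)]
      lia
    exact (Finset.le_sup (Finset.mem_range.2 (by lia))).trans
      (hWp _ (getVert_mem_support _ _) hvx).2

end Subdivision

/-- Every uniform subdivision of `T_ω` is dominating, witnessed by any injective
labelling. -/
theorem stmt5 {X : Type} (T : SimpleGraph X) (hT : UniformSubdivTOmega T)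
    (L : X → ℕ) (hL : Function.Injective L) :
    ∀ f : ℕ → ℕ, ∃ R : ℕ → X, IsRay T R ∧ EvDom f (L ∘ R) := by
  intro f
  obtain ⟨hsub, r, hr, hunif⟩ := hT
  obtain ⟨R, hR, hRp⟩ := exists_isRay_of_forall_exists_append
    (fun y (p : T.Walk r y) =>
      p.IsPath ∧ BranchVtx T y ∧ ∀ m, 1 ≤ m → m ≤ p.length → f m ≤ L (p.getVert m))
    nil ⟨.nil, hr, fun m h1 h2 => by rw [length_nil] at h2; lia⟩ (fun _ _ h => h.1)
    fun _ p ⟨hp, hx, hpf⟩ => hsub.exists_append_labels_ge hunif hL f hx p hp hpf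
  refine ⟨R, hR, eventually_atTop.2 ⟨1, fun n hn => ?_⟩⟩
  obtain ⟨_, p, ⟨-, -, hpf⟩, hn', hpR⟩ := hRp n
  rw [comp_apply, ← hpR]
  exact hpf n hn hn'
end

section
/- If a graph is the union of 𝔟 pairwise disjoint subdivisions of T_ω (where 𝔟 is the bounding number), then it is dominating. -/
open Filter Cardinal

namespace TreeWork

open SimpleGraph Walk

variable {Y : Type} (T : SimpleGraph Y) (hT : T.IsTree) (r : Y)

noncomputable def pth (a : Y) : T.Walk a r := (hT.existsUnique_path a r).exists.choose

lemma pth_isPath (a : Y) : (pth T hT r a).IsPath := (hT.existsUnique_path a r).exists.choose_spec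

lemma pth_unique {a : Y} (W : T.Walk a r) (hW : W.IsPath) : W = pth T hT r a :=
  (hT.existsUnique_path a r).unique hW (pth_isPath T hT r a)

noncomputable def dd (a : Y) : ℕ := (pth T hT r a).length

noncomputable def par (a : Y) : Y := (pth T hT r a).getVert 1

lemma pth_r : pth T hT r r = Walk.nil := (pth_unique T hT r Walk.nil IsPath.nil).symm

lemma dd_r : dd T hT r r = 0 := by simp [dd, pth_r]

lemma par_r : par T hT r r = r := by
  simp only [par, pth_r]
  exact Walk.getVert_of_length_le _ (by simp)

lemma eq_r_of_dd {a : Y} (h : dd T hT r a = 0) : a = r :=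
  Walk.eq_of_length_eq_zero h

end TreeWork

namespace TreeWork
open SimpleGraph Walk
open scoped Classical
variable {Y : Type} (T : SimpleGraph Y) (hT : T.IsTree) (r : Y)

lemma pth_decomp {a : Y} (ha : a ≠ r) :
    T.Adj a (par T hT r a) ∧ dd T hT r a = dd T hT r (par T hT r a) + 1 := by
  obtain ⟨x, h, q, hq⟩ := Walk.exists_eq_cons_of_ne ha (pth T hT r a)
  have hpq : (pth T hT r a).IsPath := pth_isPath T hT r a
  rw [hq] at hpq
  have hqp : q.IsPath := (Walk.cons_isPath_iff h q).mp hpq |>.1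
  have hx : par T hT r a = x := by
    simp [par, hq, Walk.getVert_cons_succ, Walk.getVert_zero]
  have hq' : q = pth T hT r x := pth_unique T hT r q hqp
  constructor
  · rw [hx]; exact h
  · rw [hx]; simp [dd, hq, hq']

lemma adj_par {a : Y} (ha : a ≠ r) : T.Adj a (par T hT r a) :=
  (pth_decomp T hT r ha).1

lemma dd_par {a : Y} (ha : a ≠ r) : dd T hT r a = dd T hT r (par T hT r a) + 1 :=
  (pth_decomp T hT r ha).2

/-- Key tree fact: for adjacent vertices, one is the parent of the other. -/
lemma par_or {a b : Y} (hab : T.Adj a b) :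
    par T hT r a = b ∨ par T hT r b = a := by
  by_cases hb : b ∈ (pth T hT r a).support
  · left
    have h1 : ((pth T hT r a).takeUntil b hb).IsPath := (pth_isPath T hT r a).takeUntil hb
    have h2 : (Walk.cons hab (Walk.nil : T.Walk b b)).IsPath := by
      rw [Walk.cons_isPath_iff]
      exact ⟨Walk.IsPath.nil, by simp [hab.ne]⟩
    have hun : (pth T hT r a).takeUntil b hb = Walk.cons hab Walk.nil := by
      exact congrArg Subtype.val (hT.IsAcyclic.path_unique ⟨_, h1⟩ ⟨_, h2⟩)
    have hsp := (pth T hT r a).take_spec hb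
    have heq : par T hT r a = (((pth T hT r a).takeUntil b hb).append ((pth T hT r a).dropUntil b hb)).getVert 1 := by
      rw [hsp]; rfl
    rw [heq, hun]
    simp [Walk.cons_append, Walk.getVert_cons_succ, Walk.getVert_zero]
  · right
    have h2 : (Walk.cons hab.symm (pth T hT r a)).IsPath := by
      rw [Walk.cons_isPath_iff]
      exact ⟨pth_isPath T hT r a, hb⟩
    have := pth_unique T hT r _ h2
    rw [par, ← this]
    simp [Walk.getVert_cons_succ, Walk.getVert_zero]

end TreeWork

namespace TreeWork
open SimpleGraph Walk
open scoped Classical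
variable {Y : Type} (T : SimpleGraph Y) (hT : T.IsTree) (r : Y)

lemma countable_of (hT : T.IsTree) (r : Y) (hdeg : ∀ v : Y, (T.neighborSet v).Countable) : Countable Y := by
  have h : ∀ n : ℕ, {v : Y | dd T hT r v ≤ n}.Countable := by
    intro n
    induction n with
    | zero =>
      refine Set.Countable.mono ?_ (Set.countable_singleton r)
      intro v hv
      simp only [Set.mem_setOf_eq, Nat.le_zero] at hv
      simp [eq_r_of_dd T hT r hv]
    | succ n ih =>
      have hsub : {v : Y | dd T hT r v ≤ n + 1} ⊆
          {v : Y | dd T hT r v ≤ n} ∪ ⋃ a ∈ {v : Y | dd T hT r v ≤ n}, T.neighborSet a := by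
        intro v hv
        simp only [Set.mem_setOf_eq] at hv
        rcases Nat.lt_or_ge (dd T hT r v) (n+1) with h1 | h1
        · exact Or.inl (Nat.lt_succ_iff.mp h1)
        · have hv1 : dd T hT r v = n + 1 := le_antisymm hv h1
          have hvr : v ≠ r := by
            intro h; rw [h, dd_r] at hv1; exact Nat.succ_ne_zero n hv1.symm
          right
          have h2 : par T hT r v ∈ {v : Y | dd T hT r v ≤ n} := by
            have := dd_par T hT r hvr
            simp only [Set.mem_setOf_eq]; omega
          exact Set.mem_biUnion h2 ((adj_par T hT r hvr).symm)
      exact Set.Countable.mono hsub (ih.union (Set.Countable.biUnion ih fun a _ => hdeg a))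
  have huniv : (Set.univ : Set Y).Countable := by
    refine Set.Countable.mono ?_ (Set.countable_iUnion h)
    intro v _
    exact Set.mem_iUnion.mpr ⟨dd T hT r v, by simp⟩
  exact Set.countable_univ_iff.mp huniv

lemma exists_children (hcnt : Countable Y) {x : Y} (hx : BranchVtx T x) :
    ∃ c : ℕ → Y, Function.Injective c ∧ ∀ k, T.Adj x (c k) ∧ par T hT r (c k) = x := by
  let S := T.neighborSet x \ {par T hT r x}
  haveI hinf : Infinite ↥(T.neighborSet x) := by
    rw [Cardinal.infinite_iff, hx]
  have hSinf : S.Infinite := (Set.infinite_coe_iff.mp hinf).diff (Set.finite_singleton _)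
  haveI : Infinite ↥S := hSinf.to_subtype
  have e : ℕ ≃ ↥S := (nonempty_equiv_of_countable).some
  refine ⟨fun k => ((e k : ↥S) : Y), ?_, ?_⟩
  · intro a b hab
    exact e.injective (Subtype.ext hab)
  · intro k
    have hmem : ((e k : ↥S) : Y) ∈ T.neighborSet x \ {par T hT r x} := (e k).2
    have hadj : T.Adj x ((e k : ↥S) : Y) := hmem.1
    have hne : ((e k : ↥S) : Y) ≠ par T hT r x := by
      intro h; exact hmem.2 (by simp [h])
    rcases par_or T hT r hadj with h | h
    · exact absurd h.symm hne
    · exact ⟨hadj, h⟩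

noncomputable def child (x : Y) : ℕ → Y :=
  if h : ∃ c : ℕ → Y, Function.Injective c ∧ ∀ k, T.Adj x (c k) ∧ par T hT r (c k) = x
  then h.choose else fun _ => x

lemma child_spec (hcnt : Countable Y) {x : Y} (hx : BranchVtx T x) :
    Function.Injective (child T hT r x) ∧
      ∀ k, T.Adj x (child T hT r x k) ∧ par T hT r (child T hT r x k) = x := by
  rw [child, dif_pos (exists_children T hT r hcnt hx)]
  exact (exists_children T hT r hcnt hx).choose_spec

end TreeWork

namespace TreeWork
open SimpleGraph Walk
open scoped Classical

variable {Y : Type}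

noncomputable def nxt (T : SimpleGraph Y) (htwo : ∀ v a : Y, ∃ b, T.Adj v b ∧ b ≠ a)
    (v a : Y) : Y := (htwo v a).choose

lemma nxt_adj (T : SimpleGraph Y) (htwo : ∀ v a : Y, ∃ b, T.Adj v b ∧ b ≠ a) (v a : Y) :
    T.Adj v (nxt T htwo v a) := (htwo v a).choose_spec.1

lemma nxt_ne (T : SimpleGraph Y) (htwo : ∀ v a : Y, ∃ b, T.Adj v b ∧ b ≠ a) (v a : Y) :
    nxt T htwo v a ≠ a := (htwo v a).choose_spec.2

noncomputable def chainAux (T : SimpleGraph Y) (htwo : ∀ v a : Y, ∃ b, T.Adj v b ∧ b ≠ a)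
    (x u : Y) : ℕ → Y × Y
  | 0 => (x, u)
  | (j+1) => ((chainAux T htwo x u j).2, nxt T htwo (chainAux T htwo x u j).2 (chainAux T htwo x u j).1)

noncomputable def chain (T : SimpleGraph Y) (htwo : ∀ v a : Y, ∃ b, T.Adj v b ∧ b ≠ a)
    (x u : Y) (j : ℕ) : Y := (chainAux T htwo x u j).1

variable (T : SimpleGraph Y) (htwo : ∀ v a : Y, ∃ b, T.Adj v b ∧ b ≠ a) (x u : Y)

lemma chain_zero : chain T htwo x u 0 = x := rfl

lemma chain_succ (j : ℕ) : chain T htwo x u (j+1) = (chainAux T htwo x u j).2 := rfl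

lemma chain_one : chain T htwo x u 1 = u := rfl

lemma chain_step (j : ℕ) :
    chain T htwo x u (j+2) = nxt T htwo (chain T htwo x u (j+1)) (chain T htwo x u j) := by
  rw [chain_succ T htwo x u (j+1)]
  show (chainAux T htwo x u (j+1)).2 = _
  rw [chainAux]
  cases j with
  | zero => rfl
  | succ m => rw [chain_succ, chain]

lemma chain_adj (hxu : T.Adj x u) (j : ℕ) :
    T.Adj (chain T htwo x u j) (chain T htwo x u (j+1)) := by
  cases j with
  | zero => rw [chain_zero, chain_one]; exact hxu
  | succ m => rw [chain_step]; exact nxt_adj T htwo _ _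

lemma chain_step_ne (j : ℕ) : chain T htwo x u (j+2) ≠ chain T htwo x u j := by
  rw [chain_step]; exact nxt_ne T htwo _ _

variable (hT : T.IsTree) (r : Y)

lemma chain_par (hxu : T.Adj x u) (hu : par T hT r u = x) (j : ℕ) :
    par T hT r (chain T htwo x u (j+1)) = chain T htwo x u j := by
  induction j with
  | zero => rw [chain_zero, chain_one]; exact hu
  | succ m ih =>
    rcases par_or T hT r (chain_adj T htwo x u hxu (m+1)) with h | h
    · rw [ih] at h
      exact absurd h.symm (chain_step_ne T htwo x u m)
    · exact h

lemma chain_ne_r (hxu : T.Adj x u) (hu : par T hT r u = x) (j : ℕ) :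
    chain T htwo x u (j+1) ≠ r := by
  intro h
  have h1 := chain_par T htwo x u hT r hxu hu j
  rw [h, par_r] at h1
  have := chain_adj T htwo x u hxu j
  rw [h, ← h1] at this
  exact T.irrefl this

lemma chain_dd (hxu : T.Adj x u) (hu : par T hT r u = x) (j : ℕ) :
    dd T hT r (chain T htwo x u j) = dd T hT r x + j := by
  induction j with
  | zero => rw [chain_zero]; omega
  | succ m ih =>
    have h1 := dd_par T hT r (chain_ne_r T htwo x u hT r hxu hu m)
    rw [chain_par T htwo x u hT r hxu hu m, ih] at h1
    omega

lemma chain_branch (hray : ∀ R : ℕ → Y, IsRay T R → ∃ n, BranchVtx T (R n))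
    (hxu : T.Adj x u) (hu : par T hT r u = x) :
    ∃ j, BranchVtx T (chain T htwo x u (j+1)) := by
  have hinj : Function.Injective (fun j => chain T htwo x u (j+1)) := by
    intro a b hab
    have := congrArg (dd T hT r) hab
    rw [chain_dd T htwo x u hT r hxu hu, chain_dd T htwo x u hT r hxu hu] at this
    omega
  exact hray _ ⟨hinj, fun n => chain_adj T htwo x u hxu (n+1)⟩

noncomputable def clen (x u : Y) : ℕ :=
  if h : ∃ j, BranchVtx T (chain T htwo x u (j+1)) then Nat.find h + 1 else 1

lemma clen_pos : 1 ≤ clen T htwo x u := by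
  rw [clen]; split <;> omega

lemma clen_branch (h : ∃ j, BranchVtx T (chain T htwo x u (j+1))) :
    BranchVtx T (chain T htwo x u (clen T htwo x u)) := by
  rw [clen, dif_pos h]
  exact Nat.find_spec h

lemma clen_interior (h : ∃ j, BranchVtx T (chain T htwo x u (j+1))) (j : ℕ)
    (h1 : 1 ≤ j) (h2 : j < clen T htwo x u) : ¬ BranchVtx T (chain T htwo x u j) := by
  rw [clen, dif_pos h] at h2
  obtain ⟨m, rfl⟩ : ∃ m, j = m + 1 := ⟨j - 1, by omega⟩
  exact Nat.find_min h (by omega)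

include htwo in
lemma exists_branch (hT : T.IsTree)
    (hray : ∀ R : ℕ → Y, IsRay T R → ∃ n, BranchVtx T (R n)) (hne : Nonempty Y) :
    ∃ v, BranchVtx T v := by
  obtain ⟨v⟩ := hne
  obtain ⟨b, hb, -⟩ := htwo v v
  have hu : par T hT v b = v := by
    rcases par_or T hT v hb with h | h
    · rw [par_r] at h; exact absurd h.symm hb.ne'
    · exact h
  obtain ⟨j, hj⟩ := chain_branch T htwo v b hT v hray hb hu
  exact ⟨_, hj⟩

end TreeWork

namespace TreeWork
open SimpleGraph Walk
open scoped Classical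

variable {Y : Type}

noncomputable def topv (T : SimpleGraph Y) (hT : T.IsTree) (r : Y) (v : Y) : Y :=
  if h : v = r then v
  else if BranchVtx T (par T hT r v) then v
  else topv T hT r (par T hT r v)
termination_by dd T hT r v
decreasing_by
  have := dd_par T hT r h
  omega

variable (T : SimpleGraph Y) (hT : T.IsTree) (r : Y)

lemma topv_base {v : Y} (hvr : v ≠ r) (h : BranchVtx T (par T hT r v)) :
    topv T hT r v = v := by
  rw [topv, dif_neg hvr, if_pos h]

lemma topv_step {v : Y} (hvr : v ≠ r) (h : ¬ BranchVtx T (par T hT r v)) :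
    topv T hT r v = topv T hT r (par T hT r v) := by
  rw [topv, dif_neg hvr, if_neg h]

noncomputable def lab (g : ℕ → ℕ) (v : Y) : ℕ :=
  if v = r then 0
  else g (Function.invFun (child T hT r (par T hT r (topv T hT r v))) (topv T hT r v))

variable (htwo : ∀ v a : Y, ∃ b, T.Adj v b ∧ b ≠ a)

lemma chain_top {x u : Y} (hx : BranchVtx T x) (hxu : T.Adj x u) (hu : par T hT r u = x)
    (hbr : ∃ j, BranchVtx T (chain T htwo x u (j+1))) (j : ℕ) (h1 : 1 ≤ j)
    (h2 : j ≤ clen T htwo x u) : topv T hT r (chain T htwo x u j) = u := by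
  induction j with
  | zero => omega
  | succ m ih =>
    have hner : chain T htwo x u (m+1) ≠ r := chain_ne_r T htwo x u hT r hxu hu m
    have hpar := chain_par T htwo x u hT r hxu hu m
    cases Nat.eq_or_lt_of_le h1 with
    | inl h =>
      have hm : m = 0 := by omega
      subst hm
      rw [topv_base T hT r hner (by rw [hpar, chain_zero]; exact hx), chain_one]
    | inr h =>
      have hm1 : 1 ≤ m := by omega
      have hnb : ¬ BranchVtx T (chain T htwo x u m) :=
        clen_interior T htwo x u hbr m hm1 (by omega)
      rw [topv_step T hT r hner (by rwa [hpar]), hpar]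
      exact ih (by omega) (by omega)

lemma chain_lab (hcnt : Countable Y) {x : Y} (hx : BranchVtx T x) (g : ℕ → ℕ) (k : ℕ)
    (hbr : ∃ j, BranchVtx T (chain T htwo x (child T hT r x k) (j+1))) (j : ℕ) (h1 : 1 ≤ j)
    (h2 : j ≤ clen T htwo x (child T hT r x k)) :
    lab T hT r g (chain T htwo x (child T hT r x k) j) = g k := by
  obtain ⟨hcinj, hcprop⟩ := child_spec T hT r hcnt hx
  have hxu := (hcprop k).1
  have hu := (hcprop k).2
  have htop := chain_top T hT r htwo hx hxu hu hbr j h1 h2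
  have hner : chain T htwo x (child T hT r x k) j ≠ r := by
    obtain ⟨m, rfl⟩ : ∃ m, j = m + 1 := ⟨j - 1, by omega⟩
    exact chain_ne_r T htwo x _ hT r hxu hu m
  rw [lab, if_neg hner, htop, hu]
  congr 1
  exact Function.leftInverse_invFun hcinj k

end TreeWork

namespace TreeWork
open scoped Classical

/-- running maximum -/
def rmx (f : ℕ → ℕ) (n : ℕ) : ℕ := (Finset.range (n+1)).sup f

lemma rmx_mono (f : ℕ → ℕ) : Monotone (rmx f) := by
  intro a b hab
  exact Finset.sup_mono (Finset.range_subset_range.mpr (by omega))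

lemma le_rmx (f : ℕ → ℕ) {m n : ℕ} (h : m ≤ n) : f m ≤ rmx f n :=
  Finset.le_sup (Finset.mem_range.mpr (by omega))

lemma strictMono_add_le {lam : ℕ → ℕ} (hlam : StrictMono lam) (a b : ℕ) :
    lam a + b ≤ lam (a + b) := by
  induction b with
  | zero => simp
  | succ m ih =>
    have h1 := hlam (Nat.lt_succ_self (a + m))
    rw [Nat.succ_eq_add_one] at h1
    have h2 : a + (m + 1) = (a + m) + 1 := by omega
    rw [h2]
    omega

lemma keyk (u f lam : ℕ → ℕ) (hlam : StrictMono lam)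
    (hcond : ∀ N, ∃ m, N ≤ m ∧ rmx f m < rmx u m) (n j : ℕ) :
    ∃ k, j ≤ k ∧ rmx f (n + lam k) ≤ rmx u (lam (2*k+2)) := by
  set N := n + j + 1 with hN
  obtain ⟨m, hm1, hm2⟩ := hcond (lam (2*N))
  set P : ℕ → Prop := fun k => lam (2*k) ≤ m with hP
  set k := Nat.findGreatest P m with hk
  have hPN : P N := hm1
  have hNm : N ≤ m := le_trans (le_trans (by omega) hlam.le_apply) hm1
  have hNk : N ≤ k := Nat.le_findGreatest hNm hPN
  have hk1 : lam (2*k) ≤ m := Nat.findGreatest_spec hNm hPN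
  have hk2 : m < lam (2*(k+1)) := by
    by_cases hc : k + 1 ≤ m
    · by_contra hcon
      push_neg at hcon
      exact Nat.findGreatest_is_greatest (Nat.lt_succ_self k) hc hcon
    · have h1 : 2*(k+1) ≤ lam (2*(k+1)) := hlam.le_apply
      omega
  refine ⟨k, by omega, ?_⟩
  have h3 : n + lam k ≤ lam (2*k) := by
    have := strictMono_add_le hlam k k
    have h4 : lam (k + k) ≤ lam (2*k) := by
      apply le_of_eq; congr 1; omega
    omega
  calc rmx f (n + lam k) ≤ rmx f m := rmx_mono f (le_trans h3 hk1)
    _ ≤ rmx u m := le_of_lt hm2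
    _ ≤ rmx u (lam (2*k+2)) :=
        rmx_mono u (le_of_lt (lt_of_lt_of_le hk2 (le_of_eq (congrArg lam (by omega)))))

end TreeWork

namespace TreeWork
open SimpleGraph Walk
open scoped Classical

lemma copyDom {Y : Type} (T : SimpleGraph Y) (hT : T.IsTree)
    (hdeg : ∀ v : Y, #(T.neighborSet v) = 2 ∨ BranchVtx T v)
    (hray : ∀ R : ℕ → Y, IsRay T R → ∃ n, BranchVtx T (R n))
    (u : ℕ → ℕ) :
    ∃ L : Y → ℕ, ∀ f : ℕ → ℕ, (∀ N, ∃ m, N ≤ m ∧ rmx f m < rmx u m) →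
      ∃ R : ℕ → Y, IsRay T R ∧ ∀ n, 1 ≤ n → f n ≤ L (R n) := by
  classical
  -- every vertex has at least two neighbours
  have htwo : ∀ v a : Y, ∃ b, T.Adj v b ∧ b ≠ a := by
    intro v a
    have h2 : 2 ≤ #(T.neighborSet v) := by
      rcases hdeg v with h | h
      · exact le_of_eq h.symm
      · rw [h]; exact_mod_cast (Cardinal.nat_lt_aleph0 2).le
    rw [Cardinal.two_le_iff] at h2
    obtain ⟨b1, b2, hne⟩ := h2
    by_cases hb : (b1 : Y) = a
    · refine ⟨b2, b2.2, ?_⟩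
      intro h
      exact hne (Subtype.ext (hb.trans h.symm))
    · exact ⟨b1, b1.2, hb⟩
  have hney : Nonempty Y := hT.isConnected.nonempty
  obtain ⟨y0⟩ := hney
  haveI hcnt : Countable Y := by
    refine countable_of T hT y0 ?_
    intro v
    rw [← Set.countable_coe_iff, ← Cardinal.mk_le_aleph0_iff]
    rcases hdeg v with h | h
    · rw [h]; exact_mod_cast (Cardinal.nat_lt_aleph0 2).le
    · rw [h]
  haveI : Nonempty Y := ⟨y0⟩
  obtain ⟨r, hr⟩ := exists_branch T htwo hT hray ⟨y0⟩
  obtain ⟨bv, hbv⟩ := exists_surjective_nat Y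
  obtain ⟨idx, hidx⟩ : ∃ idx : Y → ℕ, ∀ x, bv (idx x) = x :=
    ⟨fun x => (hbv x).choose, fun x => (hbv x).choose_spec⟩
  -- the length-control function
  set lamb0 : ℕ → ℕ := fun k =>
    (Finset.range (k+1)).sup (fun j => clen T htwo (bv j) (child T hT r (bv j) k)) with hlamb0
  set lamb : ℕ → ℕ := fun k => (Finset.range (k+1)).sup lamb0 + k with hlamb_def
  have hlamb : StrictMono lamb := by
    intro a b hab
    have h1 : (Finset.range (a+1)).sup lamb0 ≤ (Finset.range (b+1)).sup lamb0 :=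
      Finset.sup_mono (Finset.range_subset_range.mpr (by omega))
    simp only [hlamb_def]
    omega
  have hlamb_ge : ∀ (x : Y) (k : ℕ), idx x ≤ k →
      clen T htwo x (child T hT r x k) ≤ lamb k := by
    intro x k hjk
    have h1 : clen T htwo (bv (idx x)) (child T hT r (bv (idx x)) k) ≤ lamb0 k :=
      Finset.le_sup (f := fun j => clen T htwo (bv j) (child T hT r (bv j) k))
        (Finset.mem_range.mpr (by omega))
    rw [hidx x] at h1
    have h2 : lamb0 k ≤ (Finset.range (k+1)).sup lamb0 :=
      Finset.le_sup (Finset.mem_range.mpr (by omega))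
    simp only [hlamb_def]
    omega
  set g : ℕ → ℕ := fun k => rmx u (lamb (2*k+2)) with hg
  refine ⟨lab T hT r g, ?_⟩
  intro f hcond
  have key := keyk u f lamb hlamb hcond
  obtain ⟨kch, hkch⟩ : ∃ kch : Y → ℕ, ∀ x,
      idx x ≤ kch x ∧ rmx f (dd T hT r x + lamb (kch x)) ≤ g (kch x) :=
    ⟨fun x => (key (dd T hT r x) (idx x)).choose,
     fun x => (key (dd T hT r x) (idx x)).choose_spec⟩
  -- the branch-vertex sequence of the ray
  have hchainbr : ∀ x : Y, BranchVtx T x →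
      ∃ j, BranchVtx T (chain T htwo x (child T hT r x (kch x)) (j+1)) := by
    intro x hx
    exact chain_branch T htwo x _ hT r hray
      ((child_spec T hT r hcnt hx).2 (kch x)).1 ((child_spec T hT r hcnt hx).2 (kch x)).2
  have hbranchstep : ∀ x : Y, BranchVtx T x →
      BranchVtx T (chain T htwo x (child T hT r x (kch x))
        (clen T htwo x (child T hT r x (kch x)))) := by
    intro x hx
    exact clen_branch T htwo x _ (hchainbr x hx)
  obtain ⟨X, hX0, hXb, hXs⟩ : ∃ X : ℕ → Y, X 0 = r ∧ (∀ t, BranchVtx T (X t)) ∧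
      ∀ t, X (t+1) = chain T htwo (X t) (child T hT r (X t) (kch (X t)))
        (clen T htwo (X t) (child T hT r (X t) (kch (X t)))) := by
    let step : {v : Y // BranchVtx T v} → {v : Y // BranchVtx T v} :=
      fun p => ⟨chain T htwo p.1 (child T hT r p.1 (kch p.1))
        (clen T htwo p.1 (child T hT r p.1 (kch p.1))), hbranchstep p.1 p.2⟩
    let seq : ℕ → {v : Y // BranchVtx T v} := fun t => Nat.rec ⟨r, hr⟩ (fun _ p => step p) t
    exact ⟨fun t => (seq t).1, rfl, fun t => (seq t).2, fun t => rfl⟩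
  -- abbreviations for the chain at stage t
  have hadj_t : ∀ t, T.Adj (X t) (child T hT r (X t) (kch (X t))) :=
    fun t => ((child_spec T hT r hcnt (hXb t)).2 (kch (X t))).1
  have hpar_t : ∀ t, par T hT r (child T hT r (X t) (kch (X t))) = X t :=
    fun t => ((child_spec T hT r hcnt (hXb t)).2 (kch (X t))).2
  have hDs : ∀ t, dd T hT r (X (t+1)) =
      dd T hT r (X t) + clen T htwo (X t) (child T hT r (X t) (kch (X t))) := by
    intro t
    rw [hXs t]
    exact chain_dd T htwo _ _ hT r (hadj_t t) (hpar_t t) _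
  have hD0 : dd T hT r (X 0) = 0 := by rw [hX0, dd_r]
  have hDmono : StrictMono (fun t => dd T hT r (X t)) := by
    apply strictMono_nat_of_lt_succ
    intro t
    have h1 := hDs t
    have h2 := clen_pos T htwo (X t) (child T hT r (X t) (kch (X t)))
    omega
  -- time-to-stage function
  set tn : ℕ → ℕ := fun n => Nat.findGreatest (fun t => dd T hT r (X t) ≤ n) n with htn
  have htn_le : ∀ n, dd T hT r (X (tn n)) ≤ n := by
    intro n
    exact Nat.findGreatest_spec (P := fun t => dd T hT r (X t) ≤ n) (m := 0) (by omega)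
      (by show dd T hT r (X 0) ≤ n; rw [hD0]; omega)
  have htn_lt : ∀ n, n < dd T hT r (X (tn n + 1)) := by
    intro n
    by_contra hcon
    push_neg at hcon
    have h1 : tn n + 1 ≤ dd T hT r (X (tn n + 1)) := hDmono.le_apply
    have h2 : tn n + 1 ≤ tn n :=
      Nat.le_findGreatest (by omega) hcon
    omega
  have htn_eq : ∀ t n, dd T hT r (X t) ≤ n → n < dd T hT r (X (t+1)) → tn n = t := by
    intro t n h1 h2
    have hle : t ≤ tn n := Nat.le_findGreatest (le_trans hDmono.le_apply h1) h1
    by_contra hne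
    have hlt : t < tn n := by omega
    have h3 : dd T hT r (X (t+1)) ≤ dd T hT r (X (tn n)) := by
      have := hDmono.monotone (show t + 1 ≤ tn n by omega)
      exact this
    have := htn_le n
    omega
  -- the ray
  set R : ℕ → Y := fun n => chain T htwo (X (tn n)) (child T hT r (X (tn n)) (kch (X (tn n))))
    (n - dd T hT r (X (tn n))) with hR
  have hRdd : ∀ n, dd T hT r (R n) = n := by
    intro n
    simp only [hR]
    rw [chain_dd T htwo _ _ hT r (hadj_t (tn n)) (hpar_t (tn n))]
    have := htn_le n
    omega
  have hRinj : Function.Injective R := by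
    intro a b hab
    have := congrArg (dd T hT r) hab
    rw [hRdd, hRdd] at this
    exact this
  have hRadj : ∀ n, T.Adj (R n) (R (n+1)) := by
    intro n
    have h1 := htn_le n
    have h2 := htn_lt n
    rcases Nat.lt_or_ge (n+1) (dd T hT r (X (tn n + 1))) with hc | hc
    · -- still in the same chain
      have he : tn (n+1) = tn n := htn_eq (tn n) (n+1) (by omega) hc
      have hstep : n + 1 - dd T hT r (X (tn n)) = (n - dd T hT r (X (tn n))) + 1 := by omega
      simp only [hR, he, hstep]
      exact chain_adj T htwo _ _ (hadj_t (tn n)) _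
    · -- we arrive at the next branch vertex
      have hd1 : dd T hT r (X (tn n + 1)) = n + 1 := by omega
      have hd2 : n + 1 < dd T hT r (X (tn n + 1 + 1)) := by
        have h3 : dd T hT r (X (tn n + 1)) < dd T hT r (X (tn n + 1 + 1)) :=
          hDmono (Nat.lt_succ_self _)
        omega
      have he : tn (n+1) = tn n + 1 := htn_eq (tn n + 1) (n+1) (by omega) hd2
      have hRn1 : R (n+1) = X (tn n + 1) := by
        simp only [hR, he]
        rw [hd1, Nat.sub_self, chain_zero]
      have hRn1' : R (n+1) = chain T htwo (X (tn n)) (child T hT r (X (tn n)) (kch (X (tn n))))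
          ((n - dd T hT r (X (tn n))) + 1) := by
        rw [hRn1, hXs (tn n)]
        congr 1
        have := hDs (tn n)
        omega
      rw [hRn1']
      simp only [hR]
      exact chain_adj T htwo _ _ (hadj_t (tn n)) _
  refine ⟨R, ⟨hRinj, hRadj⟩, ?_⟩
  -- the master domination estimate
  have hmaster : ∀ t j, 1 ≤ j → j ≤ clen T htwo (X t) (child T hT r (X t) (kch (X t))) →
      f (dd T hT r (X t) + j) ≤
        lab T hT r g (chain T htwo (X t) (child T hT r (X t) (kch (X t))) j) := by
    intro t j hj1 hj2
    rw [chain_lab T hT r htwo hcnt (hXb t) g (kch (X t)) (hchainbr (X t) (hXb t)) j hj1 hj2]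
    have h1 : clen T htwo (X t) (child T hT r (X t) (kch (X t))) ≤ lamb (kch (X t)) :=
      hlamb_ge (X t) (kch (X t)) (hkch (X t)).1
    calc f (dd T hT r (X t) + j) ≤ rmx f (dd T hT r (X t) + lamb (kch (X t))) :=
          le_rmx f (by omega)
      _ ≤ g (kch (X t)) := (hkch (X t)).2
  intro n hn1
  have h1 := htn_le n
  have h2 := htn_lt n
  rcases Nat.lt_or_ge (dd T hT r (X (tn n))) n with hc | hc
  · -- strictly inside the chain of stage tn n
    have := hDs (tn n)
    have hj2 : n - dd T hT r (X (tn n)) ≤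
        clen T htwo (X (tn n)) (child T hT r (X (tn n)) (kch (X (tn n)))) := by omega
    have := hmaster (tn n) (n - dd T hT r (X (tn n))) (by omega) hj2
    simp only [hR]
    have harg : dd T hT r (X (tn n)) + (n - dd T hT r (X (tn n))) = n := by omega
    rw [harg] at this
    exact this
  · -- n = dd (X (tn n)): the vertex X (tn n) itself, end of the previous chain
    have hceq : dd T hT r (X (tn n)) = n := by omega
    have htpos : 1 ≤ tn n := by
      rcases Nat.eq_zero_or_pos (tn n) with h | h
      · rw [h] at hceq; rw [hD0] at hceq; omega
      · exact h
    obtain ⟨s, hs⟩ : ∃ s, tn n = s + 1 := ⟨tn n - 1, by omega⟩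
    have hXn : R n = X (tn n) := by
      simp only [hR]
      rw [hceq, Nat.sub_self, chain_zero]
    have hXn2 : X (tn n) = chain T htwo (X s) (child T hT r (X s) (kch (X s)))
        (clen T htwo (X s) (child T hT r (X s) (kch (X s)))) := by
      rw [hs]; exact hXs s
    have hds : dd T hT r (X s) + clen T htwo (X s) (child T hT r (X s) (kch (X s))) = n := by
      have := hDs s
      rw [← hs] at this
      omega
    have hclp := clen_pos T htwo (X s) (child T hT r (X s) (kch (X s)))
    have := hmaster s (clen T htwo (X s) (child T hT r (X s) (kch (X s)))) hclp (le_refl _)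
    rw [hds] at this
    rw [hXn, hXn2]
    exact this

end TreeWork

open TreeWork Filter Cardinal in
/-- If a graph is the union of 𝔟 disjoint subdivisions of `T_ω`, then it is dominating. -/
theorem stmt6 {X : Type} (G : SimpleGraph X) (ι : Type) (hι : #ι = bNum)
    (H : ι → Set X) (hdisj : Pairwise (Function.onFun Disjoint H))
    (hcover : ∀ x : X, ∃ i, x ∈ H i)
    (hsub : ∀ i, IsSubdivTOmega (G.induce (H i)))
    (hedge : ∀ x y : X, G.Adj x y → ∃ i, x ∈ H i ∧ y ∈ H i) :
    DominatingGraph G := by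
  classical
  -- an unbounded family of size 𝔟, indexed by ι
  have hunb : ¬ BddFamily (Set.univ : Set (ℕ → ℕ)) := by
    rintro ⟨g, hg⟩
    obtain ⟨n, hn⟩ := (hg (fun n => g n + 1) (Set.mem_univ _)).exists
    simp only [] at hn
    omega
  have hmem : bNum ∈ {c | ∃ F : Set (ℕ → ℕ), ¬ BddFamily F ∧ #F = c} :=
    csInf_mem ⟨#(Set.univ : Set (ℕ → ℕ)), Set.univ, hunb, rfl⟩
  obtain ⟨F, hFunb, hFcard⟩ := hmem
  have he : Nonempty (ι ≃ ↥F) := Cardinal.eq.mp (by rw [hι, ← hFcard])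
  obtain ⟨e⟩ := he
  set u : ι → ℕ → ℕ := fun i => (e i : ℕ → ℕ) with hu_def
  have hu : ∀ g : ℕ → ℕ, ∃ i, ¬ EvDom (u i) g := by
    intro g
    rw [BddFamily] at hFunb
    push_neg at hFunb
    obtain ⟨f, hf, hnd⟩ := hFunb g
    refine ⟨e.symm ⟨f, hf⟩, ?_⟩
    simpa [hu_def] using hnd
  -- per-copy labellings
  have hcopy : ∀ i : ι, ∃ L : ↥(H i) → ℕ, ∀ f : ℕ → ℕ,
      (∀ N, ∃ m, N ≤ m ∧ rmx f m < rmx (u i) m) →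
      ∃ R : ℕ → ↥(H i), IsRay (G.induce (H i)) R ∧ ∀ n, 1 ≤ n → f n ≤ L (R n) := by
    intro i
    exact copyDom (G.induce (H i)) (hsub i).1 (hsub i).2.1 (hsub i).2.2 (u i)
  choose Ls hLs using hcopy
  -- uniqueness of the covering copy
  have huniq : ∀ (x : X) (i j : ι), x ∈ H i → x ∈ H j → i = j := by
    intro x i j hi hj
    by_contra hne
    exact Set.disjoint_left.mp (hdisj hne) hi hj
  refine ⟨fun x => if h : ∃ i, x ∈ H i then Ls h.choose ⟨x, h.choose_spec⟩ else 0, ?_⟩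
  intro f
  obtain ⟨i, hi⟩ := hu (rmx f)
  have hcond : ∀ N, ∃ m, N ≤ m ∧ rmx f m < rmx (u i) m := by
    intro N
    rw [EvDom, Filter.not_eventually] at hi
    obtain ⟨m, hm1, hm2⟩ := Filter.frequently_atTop.mp hi N
    push_neg at hm2
    exact ⟨m, hm1, lt_of_lt_of_le hm2 (le_rmx (u i) (le_refl m))⟩
  obtain ⟨R, hRay, hdom⟩ := hLs i f hcond
  refine ⟨fun n => ((R n : ↥(H i)) : X), ⟨?_, ?_⟩, ?_⟩
  · exact fun a b hab => hRay.1 (Subtype.val_injective hab)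
  · intro n
    have := hRay.2 n
    simpa [SimpleGraph.induce] using this
  · rw [EvDom, Filter.eventually_atTop]
    refine ⟨1, fun n hn => ?_⟩
    have hmem : ((R n : ↥(H i)) : X) ∈ H i := (R n).2
    have hex : ∃ j, ((R n : ↥(H i)) : X) ∈ H j := ⟨i, hmem⟩
    simp only [Function.comp_apply, dif_pos hex]
    have hji : hex.choose = i := huniq _ _ _ hex.choose_spec hmem
    have hcast : ∀ (j : ι) (hj : ((R n : ↥(H i)) : X) ∈ H j) (hji : j = i),
        Ls j ⟨((R n : ↥(H i)) : X), hj⟩ = Ls i (R n) := by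
      intro j hj hji
      subst hji
      congr 1
    rw [hcast hex.choose hex.choose_spec hji]
    exact hdom n hn
end

section
/- Let G be a graph on X with a rank function ρ defined on all of X (ρ(x) the least ξ with x ∈ Σ_ξ, where Σ_0 = vertices of finite degree and Σ_ξ = vertices x such that for each m every family of disjoint length-m paths from x ending outside ⋃_{ζ<ξ}Σ_ζ is finite). Call a path P from x to y upward if ρ(y) = max{ρ(z) : z ∈ P}. Then for each x ∈ X and m ∈ ω, only finitely many vertices y admit an upward path of length m+1 from x to y. -/
open Filter Cardinal

/-!
Induct on the length. If upward paths of length `n + 1` from `x` reached infinitely many vertices,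
fix one such path to each of them. A vertex `w ≠ x` lies on only finitely many of these, because
their tails from `w` are shorter upward paths. Hence infinitely many of them can be chosen to meet
pairwise only in `x`. Their endpoints have rank at least `ρ x`, so this family contradicts
`x ∈ Σ_{ρ x}`; when `ρ x = 0` their second vertices are infinitely many neighbours of `x`.
-/

/-- A finite subfamily meets only finitely many members, so members can be chosen greedily. -/
theorem exists_injective_pairwise_disjoint {ι α : Type*} [Infinite ι] (s : ι → Set α)
    (hs : ∀ i, (s i).Finite) (hfib : ∀ a, {i | a ∈ s i}.Finite) :
    ∃ f : ℕ → ι, Function.Injective f ∧ Pairwise fun m n => Disjoint (s (f m)) (s (f n)) := by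
  obtain ⟨f, -, hf⟩ := exists_seq_of_forall_finset_exists (fun _ => True)
    (fun i j => i ≠ j ∧ Disjoint (s i) (s j)) fun F _ => by
      have hbad : (⋃ i ∈ F, insert i (⋃ a ∈ s i, {j | a ∈ s j})).Finite :=
        F.finite_toSet.biUnion fun i _ => ((hs i).biUnion fun a _ => hfib a).insert i
      obtain ⟨j, hj⟩ := hbad.infinite_compl.nonempty
      refine ⟨j, trivial, fun i hi => ⟨?_, Set.disjoint_left.mpr fun a hai haj => ?_⟩⟩
      · rintro rfl
        exact hj (Set.mem_biUnion hi (Set.mem_insert i _))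
      · exact hj (Set.mem_biUnion hi (Set.mem_insert_of_mem i (Set.mem_biUnion hai haj)))
  refine ⟨f, fun m n hmn => ?_, fun m n hmn => ?_⟩
  · by_contra hne
    rcases lt_or_gt_of_ne hne with h | h
    · exact (hf m n h).1 hmn
    · exact (hf n m h).1 hmn.symm
  · rcases lt_or_gt_of_ne hmn with h | h
    · exact (hf m n h).2
    · exact (hf n m h).2.symm

namespace SimpleGraph

variable {X : Type} {G : SimpleGraph X}

theorem DisjPathFam.finite_of_neighborSet_finite {x : X} {Ps : Set (Σ y : X, G.Walk x y)}
    (hPs : DisjPathFam G x Ps) (hpos : ∀ P ∈ Ps, 0 < P.2.length)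
    (hx : (G.neighborSet x).Finite) : Ps.Finite := by
  have hadj : Set.MapsTo (fun P => P.2.getVert 1) Ps (G.neighborSet x) := fun P hP => by
    simpa using P.2.adj_getVert_succ (hpos P hP)
  refine Set.Finite.of_injOn hadj (fun P hP Q hQ (hPQ : P.2.getVert 1 = Q.2.getVert 1) => ?_) hx
  by_contra hne
  exact (hadj hP).ne (hPs.2 P hP Q hQ hne _ (P.2.getVert_mem_support 1)
    (hPQ ▸ Q.2.getVert_mem_support 1)).symm

def upwardEnds {β : Type*} [LE β] (G : SimpleGraph X) (ρ : X → β) (x : X) (n : ℕ) : Set X :=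
  {y | ∃ W : G.Walk x y, W.IsPath ∧ W.length = n ∧ ∀ z ∈ W.support, ρ z ≤ ρ y}

theorem mem_biUnion_upwardEnds_of_mem_support [DecidableEq X] {β : Type*} [LE β] {ρ : X → β}
    {x y w : X} {n : ℕ} {W : G.Walk x y} (hW : W.IsPath) (hlen : W.length = n + 1)
    (hup : ∀ z ∈ W.support, ρ z ≤ ρ y) (hw : w ∈ W.support) (hwx : w ≠ x) :
    y ∈ ⋃ j ∈ Set.Iic n, upwardEnds G ρ w j :=
  Set.mem_biUnion (Set.mem_Iic.mpr (by have := W.length_dropUntil_lt_length hw hwx; omega))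
    ⟨W.dropUntil w hw, hW.dropUntil hw, rfl,
      fun z hz => hup z (W.support_dropUntil_subset_support hw hz)⟩

theorem upwardEnds_finite {β : Type*} [LE β] {ρ : X → β}
    (hfan : ∀ (x : X) (n : ℕ) (Ps : Set (Σ y : X, G.Walk x y)), DisjPathFam G x Ps →
      (∀ P ∈ Ps, P.2.length = n + 1) → (∀ P ∈ Ps, ρ x ≤ ρ P.1) → Ps.Finite) :
    ∀ n x, (upwardEnds G ρ x n).Finite := by
  classical
  intro n
  induction n using Nat.strong_induction_on with
  | _ n IH =>
  intro x
  rcases n with _ | n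
  · refine (Set.finite_singleton x).subset ?_
    rintro y ⟨W, -, hlen, -⟩
    exact (Walk.eq_of_length_eq_zero hlen).symm
  by_contra hinf
  have : Infinite (upwardEnds G ρ x (n + 1)) := Set.infinite_coe_iff.mpr hinf
  choose W hW hlen hup using fun y : upwardEnds G ρ x (n + 1) => y.2
  obtain ⟨f, hf, hdisj⟩ := exists_injective_pairwise_disjoint
    (fun y => {z | z ∈ (W y).support} \ {x}) (fun y => (W y).support.finite_toSet.sdiff)
    fun w => by
      by_cases hwx : w = x
      · simp [hwx]
      refine (((Set.finite_Iic n).biUnion fun j hj =>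
        IH j (Nat.lt_succ_of_le hj) w).preimage Subtype.val_injective.injOn).subset ?_
      rintro y ⟨hw, -⟩
      exact mem_biUnion_upwardEnds_of_mem_support (hW y) (hlen y) (hup y) hw hwx
  let F : ℕ → Σ y : X, G.Walk x y := fun k => ⟨f k, W (f k)⟩
  have hF : F.Injective := fun k l h => hf (Subtype.val_injective (congrArg Sigma.fst h))
  refine Set.infinite_range_of_injective hF (hfan x n _ ⟨?_, ?_⟩ ?_ ?_)
  · rintro _ ⟨k, rfl⟩
    exact hW (f k)
  · rintro _ ⟨k, rfl⟩ _ ⟨l, rfl⟩ hkl v hvk hvl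
    by_contra hvx
    have hkl : k ≠ l := fun h => hkl (h ▸ rfl)
    exact Set.disjoint_left.mp (hdisj hkl) ⟨hvk, hvx⟩ ⟨hvl, hvx⟩
  · rintro _ ⟨k, rfl⟩
    exact hlen (f k)
  · rintro _ ⟨k, rfl⟩
    exact hup (f k) x (W (f k)).start_mem_support

end SimpleGraph

open SimpleGraph

/-- If the rank `ρ` is defined everywhere, then for each vertex `x` and each `m`, only
finitely many vertices `y` admit an upward path of length `m+1` from `x` to `y`. -/
theorem stmt12 {X : Type} (G : SimpleGraph X) (S : Ordinal → Set X)
    (h0 : S 0 = {x : X | (G.neighborSet x).Finite})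
    (hS : ∀ ξ : Ordinal, 0 < ξ → S ξ = {x : X | ∀ m : ℕ,
      ∀ Ps : Set (Σ y : X, G.Walk x y), DisjPathFam G x Ps →
        (∀ P ∈ Ps, (Sigma.snd P).length = m) →
        (∀ P ∈ Ps, Sigma.fst P ∉ ⋃ ζ ∈ Set.Iio ξ, S ζ) → Ps.Finite})
    (ρ : X → Ordinal)
    (hρ : ∀ x : X, x ∈ S (ρ x) ∧ ∀ ξ : Ordinal, ξ < ρ x → x ∉ S ξ) :
    ∀ (x : X) (m : ℕ),
      {y : X | ∃ W : G.Walk x y, W.IsPath ∧ W.length = m + 1 ∧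
        ∀ z ∈ W.support, ρ z ≤ ρ y}.Finite := by
  refine fun x m => upwardEnds_finite (fun x n Ps hPs hlen hle => ?_) (m + 1) x
  rcases eq_zero_or_pos (ρ x) with hx | hx
  · have hfin : x ∈ S 0 := hx ▸ (hρ x).1
    rw [h0] at hfin
    exact hPs.finite_of_neighborSet_finite (fun P hP => (hlen P hP).symm ▸ n.succ_pos) hfin
  · have hmem := (hρ x).1
    rw [hS _ hx] at hmem
    refine hmem (n + 1) Ps hPs hlen fun P hP hlow => ?_
    obtain ⟨ζ, hζ, hPζ⟩ := Set.mem_iUnion₂.mp hlow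
    exact (hρ P.1).2 ζ (lt_of_lt_of_le hζ (hle P hP)) hPζ
end

section
/- Let G be a graph on X and x a vertex, and let Y ⊆ X \ {x}. If every family of pairwise disjoint paths starting at x and ending in Y is finite, then there is a uniform finite bound on the cardinalities of all such families, and consequently x can be separated from Y by a finite vertex set Y_x ⊆ X \ {x} (every path from x to a vertex of Y meets Y_x). -/
open Filter Cardinal

/-- If every family of disjoint paths from `x` into `Y` is finite, then their sizes are
uniformly bounded, and `x` can be separated from `Y` by a finite set `Y_x` avoiding `x`. -/
theorem stmt13 {X : Type} (G : SimpleGraph X) (x : X) (Y : Set X) (hxY : x ∉ Y)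
    (hfin : ∀ Ps : Set (Σ y : X, G.Walk x y), DisjPathFam G x Ps →
      (∀ P ∈ Ps, Sigma.fst P ∈ Y) → Ps.Finite) :
    (∃ N : ℕ, ∀ Ps : Set (Σ y : X, G.Walk x y), DisjPathFam G x Ps →
      (∀ P ∈ Ps, Sigma.fst P ∈ Y) → Nat.card Ps ≤ N) ∧
    ∃ Yx : Set X, Yx.Finite ∧ x ∉ Yx ∧
      ∀ y ∈ Y, ∀ W : G.Walk x y, W.IsPath → ∃ v ∈ Yx, v ∈ W.support := by
  set S : Set (Set (Σ y : X, G.Walk x y)) :=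
    {Ps | DisjPathFam G x Ps ∧ ∀ P ∈ Ps, Sigma.fst P ∈ Y} with hSdef
  obtain ⟨M, hMmax⟩ : ∃ M, Maximal (· ∈ S) M := by
    apply zorn_subset
    intro c hcS hchain
    refine ⟨⋃₀ c, ⟨⟨?_, ?_⟩, ?_⟩, fun s hs => Set.subset_sUnion_of_mem hs⟩
    · rintro P ⟨a, hac, hPa⟩
      exact (hcS hac).1.1 P hPa
    · rintro P ⟨a, hac, hPa⟩ Q ⟨b, hbc, hQb⟩ hPQ v hvP hvQ
      rcases hchain.total hac hbc with h | h
      · exact (hcS hbc).1.2 P (h hPa) Q hQb hPQ v hvP hvQ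
      · exact (hcS hac).1.2 P hPa Q (h hQb) hPQ v hvP hvQ
    · rintro P ⟨a, hac, hPa⟩
      exact (hcS hac).2 P hPa
  have hMS : M ∈ S := hMmax.1
  have hMfin : M.Finite := hfin M hMS.1 hMS.2
  set Yx : Set X := (⋃ P ∈ M, {v | v ∈ (Sigma.snd P).support}) \ {x} with hYxdef
  have hYxfin : Yx.Finite := by
    apply Set.Finite.diff
    exact Set.Finite.biUnion hMfin (fun P _ => (Sigma.snd P).support.finite_toSet)
  have hxYx : x ∉ Yx := fun h => h.2 rfl
  have hsep : ∀ y ∈ Y, ∀ W : G.Walk x y, W.IsPath → ∃ v ∈ Yx, v ∈ W.support := by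
    intro y hy W hW
    by_contra hcon
    push_neg at hcon
    have hyx : y ≠ x := fun h => hxY (h ▸ hy)
    have hQM : (⟨y, W⟩ : Σ y : X, G.Walk x y) ∉ M := by
      intro hmem
      have : y ∈ Yx := ⟨Set.mem_biUnion hmem W.end_mem_support, hyx⟩
      exact hcon y this W.end_mem_support
    have hdisj : ∀ P ∈ M, ∀ v, v ∈ (Sigma.snd P).support → v ∈ W.support → v = x := by
      intro P hP v hvP hvW
      by_contra hvx
      exact hcon v ⟨Set.mem_biUnion hP hvP, hvx⟩ hvW
    have hS' : insert (⟨y, W⟩ : Σ y : X, G.Walk x y) M ∈ S := by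
      refine ⟨⟨?_, ?_⟩, ?_⟩
      · rintro P (rfl | hP)
        · exact hW
        · exact hMS.1.1 P hP
      · rintro P (rfl | hP) Q (rfl | hQ) hPQ v hvP hvQ
        · exact absurd rfl hPQ
        · exact hdisj Q hQ v hvQ hvP
        · exact hdisj P hP v hvP hvQ
        · exact hMS.1.2 P hP Q hQ hPQ v hvP hvQ
      · rintro P (rfl | hP)
        · exact hy
        · exact hMS.2 P hP
    exact hQM (hMmax.2 hS' (Set.subset_insert _ _) (Set.mem_insert _ _))
  refine ⟨⟨Nat.card Yx, ?_⟩, Yx, hYxfin, hxYx, hsep⟩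
  intro Ps hPs hPsY
  have : Finite Yx := hYxfin
  have hchoice : ∀ P : Ps, ∃ v : Yx, (v : X) ∈ (Sigma.snd (P : Σ y : X, G.Walk x y)).support := by
    rintro ⟨P, hP⟩
    obtain ⟨v, hv, hvP⟩ := hsep P.1 (hPsY P hP) P.2 (hPs.1 P hP)
    exact ⟨⟨v, hv⟩, hvP⟩
  choose f hf using hchoice
  have hinj : Function.Injective f := by
    rintro ⟨P, hP⟩ ⟨Q, hQ⟩ hfPQ
    by_contra hne
    have hne' : P ≠ Q := fun h => hne (Subtype.ext h)
    have h1 := hf ⟨P, hP⟩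
    have h2 := hf ⟨Q, hQ⟩
    rw [hfPQ] at h1
    have := hPs.2 P hP Q hQ hne' _ h1 h2
    exact (f ⟨Q, hQ⟩).2.2 this
  exact Nat.card_le_card_of_injective f hinj
end

section
/- Let G be a graph on X, Y ⊆ X, and L : X → ω. Then there exists Z with Y ⊆ Z ⊆ X and |Z| = |Y| such that: for every ray R in G having infinitely many vertices in Z and with L ∘ R tending to infinity, there is a ray R' in the induced subgraph G ∩ [Z]² with L ∘ R' = L ∘ R. -/
open Filter Cardinal

section Stmt14Aux
variable {X : Type} (G : SimpleGraph X) (L : X → ℕ)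

/-- A finite path with label string `s`, ending at `v`, and starting at `u` if `o = some u`. -/
def SegPath (s : List ℕ) (o : Option X) (v : X) (p : ℕ → X) : Prop :=
  (∀ i, i + 1 < s.length → G.Adj (p i) (p (i + 1))) ∧
  (∀ i < s.length, ∀ j < s.length, p i = p j → i = j) ∧
  (∀ i < s.length, L (p i) = s.getD i 0) ∧
  p (s.length - 1) = v ∧ ∀ u, o = some u → p 0 = u

def Pins (o : Option X) (v : X) : Set X := insert v {u | o = some u}

def IntDisj (s : List ℕ) (o : Option X) (v : X) (p q : ℕ → X) : Prop :=
  ∀ i < s.length, ∀ j < s.length, p i = q j → p i ∈ Pins o v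

lemma exists_A (v : X) (o : Option X) (s : List ℕ) :
    ∃ A : Set X, A.Countable ∧
      ((∃ g : ℕ → ℕ → X, (∀ k, SegPath G L s o v (g k)) ∧
          (∀ k k', k ≠ k' → IntDisj s o v (g k) (g k')) ∧
          ∀ k, ∀ i < s.length, g k i ∈ A) ∨
        (∀ p, SegPath G L s o v p →
          (3 ≤ s.length ∨ (o = none ∧ 2 ≤ s.length)) →
          ∃ i < s.length, p i ∈ A ∧ p i ∉ Pins o v)) := by
  classical
  set 𝒞 : Set (Set (ℕ → X)) :=
    {M | (∀ p ∈ M, SegPath G L s o v p) ∧ M.Pairwise (IntDisj s o v)} with h𝒞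
  obtain ⟨M, hM⟩ : ∃ M, Maximal (· ∈ 𝒞) M := by
    apply zorn_subset
    intro c hc hchain
    refine ⟨⋃₀ c, ⟨?_, ?_⟩, fun t ht => Set.subset_sUnion_of_mem ht⟩
    · rintro p ⟨t, htc, hpt⟩
      exact (hc htc).1 p hpt
    · rintro p ⟨t, htc, hpt⟩ q ⟨t', ht'c, hqt'⟩ hpq
      rcases hchain.total htc ht'c with h | h
      · exact (hc ht'c).2 (h hpt) hqt' hpq
      · exact (hc htc).2 hpt (h hqt') hpq
  by_cases hMinf : M.Infinite
  · -- infinite family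
    set e := hMinf.natEmbedding
    refine ⟨⋃ k : ℕ, (e k : ℕ → X) '' (Set.Iio s.length), ?_, Or.inl ?_⟩
    · exact Set.countable_iUnion fun k => ((Set.Iio s.length).to_countable).image _
    · refine ⟨fun k => (e k : ℕ → X), fun k => hM.1.1 _ (e k).2, ?_, ?_⟩
      · intro k k' hkk'
        have : (e k : ℕ → X) ≠ (e k' : ℕ → X) := by
          intro h
          exact hkk' (e.injective (Subtype.ext h))
        exact hM.1.2 (e k).2 (e k').2 this
      · intro k i hi
        exact Set.mem_iUnion.2 ⟨k, Set.mem_image_of_mem _ hi⟩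
  · -- maximal finite family: hitting set
    have hMfin : M.Finite := Set.not_infinite.mp hMinf
    refine ⟨⋃ p ∈ M, p '' (Set.Iio s.length), ?_, Or.inr ?_⟩
    · exact (hMfin.biUnion fun p _ => ((Set.finite_Iio _).image p)).countable
    · intro p hp hguard
      by_cases hpM : p ∈ M
      · -- p itself: find a non-pinned index
        obtain ⟨i, hi, hnp⟩ : ∃ i < s.length, p i ∉ Pins o v := by
          rcases hguard with h3 | ⟨ho, h2⟩
          · refine ⟨1, by omega, ?_⟩
            rintro (h1 | h1)
            · have : (1 : ℕ) = s.length - 1 :=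
                hp.2.1 1 (by omega) (s.length - 1) (by omega) (by rw [h1, hp.2.2.2.1])
              omega
            · cases o with
              | none => simp [Set.mem_setOf_eq] at h1
              | some u =>
                have hp0 : p 0 = u := hp.2.2.2.2 u rfl
                have h1' : p 1 = u := by simpa [Set.mem_setOf_eq] using h1
                have : (0 : ℕ) = 1 := hp.2.1 0 (by omega) 1 (by omega) (by rw [hp0, h1'])
                omega
          · refine ⟨0, by omega, ?_⟩
            rintro (h1 | h1)
            · have : (0 : ℕ) = s.length - 1 :=
                hp.2.1 0 (by omega) (s.length - 1) (by omega) (by rw [h1, hp.2.2.2.1])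
              omega
            · rw [ho] at h1; simp [Set.mem_setOf_eq] at h1
        exact ⟨i, hi, Set.mem_biUnion hpM (Set.mem_image_of_mem _ hi), hnp⟩
      · -- maximality: p meets some member of M off the pins
        have hnotC : insert p M ∉ 𝒞 := by
          intro hC
          exact hpM (hM.2 hC (Set.subset_insert p M) (Set.mem_insert p M))
        have hnpw : ¬ (insert p M).Pairwise (IntDisj s o v) := by
          intro hpw
          exact hnotC ⟨by rintro q (rfl | hq); exacts [hp, hM.1.1 q hq], hpw⟩
        rw [Set.pairwise_insert] at hnpw
        push_neg at hnpw
        obtain ⟨q, hqM, hpq, hbad⟩ := hnpw hM.1.2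
        by_cases h1 : IntDisj s o v p q
        · have h2 : ¬ IntDisj s o v q p := hbad h1
          unfold IntDisj at h2
          push_neg at h2
          obtain ⟨i, hi, j, hj, he, hnp⟩ := h2
          refine ⟨j, hj, ?_, by rw [← he]; exact hnp⟩
          have : q i ∈ q '' (Set.Iio s.length) := Set.mem_image_of_mem q (show i ∈ Set.Iio s.length from hi)
          rw [he] at this
          exact Set.mem_biUnion hqM this
        · unfold IntDisj at h1
          push_neg at h1
          obtain ⟨i, hi, j, hj, he, hnp⟩ := h1
          refine ⟨i, hi, ?_, hnp⟩
          have : q j ∈ q '' (Set.Iio s.length) := Set.mem_image_of_mem q (show j ∈ Set.Iio s.length from hj)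
          rw [← he] at this
          exact Set.mem_biUnion hqM this

noncomputable def Afam (v : X) (o : Option X) (s : List ℕ) : Set X :=
  (exists_A G L v o s).choose

lemma Afam_countable (v : X) (o : Option X) (s : List ℕ) : (Afam G L v o s).Countable :=
  (exists_A G L v o s).choose_spec.1

lemma Afam_spec (v : X) (o : Option X) (s : List ℕ) :
    (∃ g : ℕ → ℕ → X, (∀ k, SegPath G L s o v (g k)) ∧
        (∀ k k', k ≠ k' → IntDisj s o v (g k) (g k')) ∧
        ∀ k, ∀ i < s.length, g k i ∈ Afam G L v o s) ∨
      (∀ p, SegPath G L s o v p →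
        (3 ≤ s.length ∨ (o = none ∧ 2 ≤ s.length)) →
        ∃ i < s.length, p i ∈ Afam G L v o s ∧ p i ∉ Pins o v) :=
  (exists_A G L v o s).choose_spec.2

noncomputable def Zs (Y : Set X) : ℕ → Set X
  | 0 => Y
  | (m + 1) => Zs Y m ∪
      ⋃ v ∈ Zs Y m, ⋃ s : List ℕ, (Afam G L v none s ∪ ⋃ u ∈ Zs Y m, Afam G L v (some u) s)

noncomputable def Zc (Y : Set X) : Set X := ⋃ m, Zs G L Y m

lemma Zs_mono (Y : Set X) : Monotone (Zs G L Y) :=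
  monotone_nat_of_le_succ fun _ => Set.subset_union_left

lemma subset_Zc (Y : Set X) : Y ⊆ Zc G L Y := Set.subset_iUnion (Zs G L Y) 0

lemma Afam_subset_Zc {Y : Set X} {v : X} {o : Option X} (s : List ℕ)
    (hv : v ∈ Zc G L Y) (ho : ∀ u, o = some u → u ∈ Zc G L Y) :
    Afam G L v o s ⊆ Zc G L Y := by
  obtain ⟨m, hm⟩ : ∃ m, v ∈ Zs G L Y m ∧ ∀ u, o = some u → u ∈ Zs G L Y m := by
    obtain ⟨m1, hm1⟩ := Set.mem_iUnion.1 hv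
    cases o with
    | none => exact ⟨m1, hm1, by simp⟩
    | some u =>
      obtain ⟨m2, hm2⟩ := Set.mem_iUnion.1 (ho u rfl)
      refine ⟨max m1 m2, Zs_mono G L Y (le_max_left _ _) hm1, ?_⟩
      rintro u' h'
      cases h'
      exact Zs_mono G L Y (le_max_right _ _) hm2
  intro x hx
  apply Set.mem_iUnion.2 ⟨m + 1, ?_⟩
  refine Set.mem_union_right _ ?_
  refine Set.mem_biUnion hm.1 ?_
  refine Set.mem_iUnion.2 ⟨s, ?_⟩
  cases o with
  | none => exact Set.mem_union_left _ hx
  | some u => exact Set.mem_union_right _ (Set.mem_biUnion (hm.2 u rfl) hx)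

lemma mk_Zs_le (Y : Set X) (hY : Y.Infinite) : ∀ m, #(Zs G L Y m) ≤ #Y := by
  have hYa : ℵ₀ ≤ #Y := (@Cardinal.aleph0_le_mk _ hY.to_subtype)
  intro m
  induction m with
  | zero => exact le_rfl
  | succ m ih =>
    have hGv : ∀ v : X, ∀ s : List ℕ,
        #(Afam G L v none s ∪ ⋃ u ∈ Zs G L Y m, Afam G L v (some u) s : Set X) ≤ #Y := by
      intro v s
      refine (mk_union_le _ _).trans ?_
      have h1 : #(Afam G L v none s) ≤ #Y := (Afam_countable G L v none s).le_aleph0.trans hYa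
      have h2 : #(⋃ u ∈ Zs G L Y m, Afam G L v (some u) s : Set X) ≤ #Y := by
        refine (mk_biUnion_le _ _).trans ?_
        have : ⨆ u : (Zs G L Y m), #(Afam G L v (some u.1) s) ≤ ℵ₀ :=
          ciSup_le' fun u => (Afam_countable G L v (some u.1) s).le_aleph0
        calc #(Zs G L Y m) * ⨆ u : (Zs G L Y m), #(Afam G L v (some u.1) s)
            ≤ #Y * ℵ₀ := mul_le_mul' ih this
          _ ≤ #Y * #Y := mul_le_mul' le_rfl hYa
          _ = #Y := mul_eq_self hYa
      calc #(Afam G L v none s) + #(⋃ u ∈ Zs G L Y m, Afam G L v (some u) s : Set X)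
          ≤ #Y + #Y := add_le_add h1 h2
        _ = #Y := add_eq_self hYa
    have hFv : ∀ v : X,
        #(⋃ s : List ℕ, (Afam G L v none s ∪ ⋃ u ∈ Zs G L Y m, Afam G L v (some u) s) : Set X) ≤ #Y := by
      intro v
      refine (mk_iUnion_le _).trans ?_
      calc #(List ℕ) * ⨆ s : List ℕ, #((Afam G L v none s ∪ ⋃ u ∈ Zs G L Y m, Afam G L v (some u) s : Set X))
          ≤ ℵ₀ * #Y := by
            refine mul_le_mul' (le_of_eq (mk_list_eq_aleph0 ℕ)) (ciSup_le' fun s => hGv v s)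
        _ ≤ #Y * #Y := mul_le_mul' hYa le_rfl
        _ = #Y := mul_eq_self hYa
    show #(Zs G L Y m ∪ ⋃ v ∈ Zs G L Y m, ⋃ s : List ℕ,
        (Afam G L v none s ∪ ⋃ u ∈ Zs G L Y m, Afam G L v (some u) s) : Set X) ≤ #Y
    refine (mk_union_le _ _).trans ?_
    have h2 : #(⋃ v ∈ Zs G L Y m, ⋃ s : List ℕ,
        (Afam G L v none s ∪ ⋃ u ∈ Zs G L Y m, Afam G L v (some u) s) : Set X) ≤ #Y := by
      refine (mk_biUnion_le _ _).trans ?_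
      calc #(Zs G L Y m) * ⨆ v : (Zs G L Y m), #(⋃ s : List ℕ,
            (Afam G L v.1 none s ∪ ⋃ u ∈ Zs G L Y m, Afam G L v.1 (some u) s) : Set X)
          ≤ #Y * #Y := mul_le_mul' ih (ciSup_le' fun v => hFv v.1)
        _ = #Y := mul_eq_self hYa
    calc #(Zs G L Y m) + _ ≤ #Y + #Y := add_le_add ih h2
      _ = #Y := add_eq_self hYa

lemma mk_Zc (Y : Set X) (hY : Y.Infinite) : #(Zc G L Y) = #Y := by
  have hYa : ℵ₀ ≤ #Y := (@Cardinal.aleph0_le_mk _ hY.to_subtype)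
  refine le_antisymm ?_ (mk_le_mk_of_subset (subset_Zc G L Y))
  refine (mk_iUnion_le _).trans ?_
  calc #ℕ * ⨆ m, #(Zs G L Y m) ≤ ℵ₀ * #Y := by
        refine mul_le_mul' (le_of_eq mk_nat) (ciSup_le' fun m => mk_Zs_le G L Y hY m)
    _ ≤ #Y * #Y := mul_le_mul' hYa le_rfl
    _ = #Y := mul_eq_self hYa

def startg (h : ℕ → ℕ) : ℕ → ℕ
  | 0 => 0
  | (i + 1) => h i

def leng (h : ℕ → ℕ) (i : ℕ) : ℕ := h i - startg h i + 1

def strg (L : X → ℕ) (R : ℕ → X) (h : ℕ → ℕ) (i : ℕ) : List ℕ :=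
  (List.range (leng h i)).map fun a => L (R (startg h i + a))

def og (R : ℕ → X) (h : ℕ → ℕ) : ℕ → Option X
  | 0 => none
  | (i + 1) => some (R (h i))

def vg (R : ℕ → X) (h : ℕ → ℕ) (i : ℕ) : X := R (h i)

def NPidx (h : ℕ → ℕ) (i a : ℕ) : Prop := a + 1 ≠ leng h i ∧ (i = 0 ∨ a ≠ 0)

def Bg (L : X → ℕ) (R : ℕ → X) (h : ℕ → ℕ) (i : ℕ) : Set X :=
  ⋃ a ∈ Finset.range (leng h i), R '' {n | L (R n) = (strg L R h i).getD a 0}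

lemma strg_length (R : ℕ → X) (h : ℕ → ℕ) (i : ℕ) : (strg L R h i).length = leng h i := by
  simp [strg]

lemma strg_getD (R : ℕ → X) (h : ℕ → ℕ) {i a : ℕ} (ha : a < leng h i) :
    (strg L R h i).getD a 0 = L (R (startg h i + a)) := by
  rw [strg, List.getD_eq_getElem?_getD]
  simp [List.getElem?_map, List.getElem?_range, ha]

lemma startg_add (h : ℕ → ℕ) (hmono : StrictMono h) (i : ℕ) :
    startg h i + (leng h i - 1) = h i ∧ 1 ≤ leng h i ∧ (i = 0 ∨ 2 ≤ leng h i) := by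
  cases i with
  | zero => simp [startg, leng]
  | succ i =>
    have : h i < h (i + 1) := hmono (Nat.lt_succ_self i)
    refine ⟨?_, ?_, Or.inr ?_⟩ <;> simp [startg, leng] <;> omega

def Invg (Z : Set X) (R : ℕ → X) (h : ℕ → ℕ) (m : ℕ) (f : ℕ → ℕ → X) : Prop :=
  ∀ i < m, SegPath G L (strg L R h i) (og R h i) (vg R h i) (f i) ∧
    (∀ a < leng h i, f i a ∈ Z) ∧
    ∀ a < leng h i, NPidx h i a → f i a ∉ Bg L R h i ∧
      ∀ j < i, ∀ b < leng h j, f i a ≠ f j b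

lemma step_ex (Y : Set X) (R : ℕ → X) (h : ℕ → ℕ) (hR : IsRay G R)
    (hfib : ∀ k, {n | L (R n) = k}.Finite)
    (hmono : StrictMono h) (hmem : ∀ i, R (h i) ∈ Zc G L Y)
    (hgap : ∀ n, R n ∈ Zc G L Y → ∃ i, n = h i)
    (m : ℕ) (f : ℕ → ℕ → X) (hf : Invg G L (Zc G L Y) R h m f) :
    ∃ p, Invg G L (Zc G L Y) R h (m + 1) (Function.update f m p) := by
  classical
  set Z := Zc G L Y with hZ
  set s := strg L R h m with hs
  have hsl : s.length = leng h m := strg_length L R h m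
  obtain ⟨hstadd, hlen1, hlen2⟩ := startg_add h hmono m
  set st := startg h m with hst
  -- the original segment of R
  set pstar : ℕ → X := fun a => R (st + a) with hpstar
  have hpseg : SegPath G L s (og R h m) (vg R h m) pstar := by
    refine ⟨?_, ?_, ?_, ?_, ?_⟩
    · intro i _
      have := hR.2 (st + i)
      have he : st + (i + 1) = st + i + 1 := by omega
      rw [hpstar]; simp only []
      rw [he]; exact this
    · intro i _ j _ he
      have := hR.1 he
      omega
    · intro i hi
      rw [hsl] at hi
      rw [hs, strg_getD L R h hi]
    · rw [hsl]
      show R (st + (leng h m - 1)) = vg R h m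
      rw [hstadd]; rfl
    · intro u hu
      cases m with
      | zero => simp [og] at hu
      | succ i =>
        simp only [og, Option.some.injEq] at hu
        show R (st + 0) = u
        rw [← hu]
        simp [hst, startg]
  -- helper to extend f
  have hupd : ∀ p : ℕ → X,
      SegPath G L s (og R h m) (vg R h m) p →
      (∀ a < leng h m, p a ∈ Z) →
      (∀ a < leng h m, NPidx h m a → p a ∉ Bg L R h m ∧
        ∀ j < m, ∀ b < leng h j, p a ≠ f j b) →
      Invg G L Z R h (m + 1) (Function.update f m p) := by
    intro p hp1 hp2 hp3 i hi
    rcases Nat.lt_succ_iff_lt_or_eq.1 hi with hi' | rfl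
    · obtain ⟨c1, c2, c3⟩ := hf i hi'
      rw [Function.update_of_ne (by omega)]
      refine ⟨c1, c2, fun a ha hnp => ⟨(c3 a ha hnp).1, fun j hj b hb => ?_⟩⟩
      rw [Function.update_of_ne (by omega)]
      exact (c3 a ha hnp).2 j hj b hb
    · rw [Function.update_self]
      refine ⟨hp1, hp2, fun a ha hnp => ⟨(hp3 a ha hnp).1, fun j hj b hb => ?_⟩⟩
      rw [Function.update_of_ne (by omega)]
      exact (hp3 a ha hnp).2 j hj b hb
  by_cases hdeg : (m = 0 ∧ leng h m = 1) ∨ (m ≠ 0 ∧ leng h m = 2)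
  · -- degenerate: use the original segment
    refine ⟨pstar, hupd pstar hpseg ?_ ?_⟩
    · intro a ha
      rcases hdeg with ⟨hm0, hl1⟩ | ⟨hm0, hl2⟩
      · have ha0 : a = 0 := by omega
        subst ha0
        have he : st + 0 = h m := by omega
        show R (st + 0) ∈ Z
        rw [he]; exact hmem m
      · cases m with
        | zero => exact absurd rfl hm0
        | succ i =>
          have hsti : st = h i := rfl
          have : a = 0 ∨ a = 1 := by omega
          rcases this with rfl | rfl
          · show R (st + 0) ∈ Z
            have : st + 0 = h i := by omega
            rw [this]; exact hmem i
          · show R (st + 1) ∈ Z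
            have : st + 1 = h (i + 1) := by omega
            rw [this]; exact hmem (i + 1)
    · intro a ha hnp
      exfalso
      rcases hnp with ⟨h1, h2⟩
      rcases hdeg with ⟨hm0, hl1⟩ | ⟨hm0, hl2⟩
      · omega
      · rcases h2 with h2 | h2 <;> omega
  · -- main case
    push_neg at hdeg
    have hguard : 3 ≤ s.length ∨ (og R h m = none ∧ 2 ≤ s.length) := by
      rw [hsl]
      rcases Nat.eq_zero_or_pos m with rfl | hm
      · right
        exact ⟨rfl, by omega⟩
      · left
        have := hdeg.2 (by omega)
        rcases hlen2 with h' | h' <;> omega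
    have hvZ : vg R h m ∈ Z := hmem m
    have hoZ : ∀ u, og R h m = some u → u ∈ Z := by
      intro u hu
      cases m with
      | zero => simp [og] at hu
      | succ i =>
        simp only [og, Option.some.injEq] at hu
        rw [← hu]; exact hmem i
    have hA : Afam G L (vg R h m) (og R h m) s ⊆ Z := Afam_subset_Zc G L s hvZ hoZ
    rcases Afam_spec G L (vg R h m) (og R h m) s with ⟨g, hg1, hg2, hg3⟩ | hhit
    · -- infinite family: choose one avoiding Bad
      set Bad : Set X := Bg L R h m ∪ ⋃ j ∈ Finset.range m, f j '' (Set.Iio (leng h j))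
        with hBad
      have hBadFin : Bad.Finite := by
        apply Set.Finite.union
        · apply Set.Finite.biUnion (Finset.range (leng h m)).finite_toSet
          intro a _
          exact ((hfib _).image R)
        · apply Set.Finite.biUnion (Finset.range m).finite_toSet
          intro j _
          exact (Set.finite_Iio _).image _
      have hk : ∃ k, ∀ a < leng h m, NPidx h m a → g k a ∉ Bad := by
        by_contra hcon
        push_neg at hcon
        choose ax ha1 ha2 ha3 using hcon
        have hinj : Function.Injective fun k => g k (ax k) := by
          intro k k' he
          simp only [] at he
          by_contra hne
          have hpin := hg2 k k' hne (ax k) (by rw [hsl]; exact ha1 k) (ax k')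
            (by rw [hsl]; exact ha1 k') he
          rcases Set.mem_insert_iff.1 hpin with h1 | h1
          · have hend : g k (s.length - 1) = vg R h m := (hg1 k).2.2.2.1
            have heq : ax k = s.length - 1 :=
              (hg1 k).2.1 (ax k) (by rw [hsl]; exact ha1 k) (s.length - 1)
                (by rw [hsl]; omega) (by rw [hend]; exact h1)
            rw [hsl] at heq
            have h1' := (ha2 k).1
            have h2' := ha1 k
            omega
          · simp only [Set.mem_setOf_eq] at h1
            cases m with
            | zero => simp [og] at h1
            | succ i =>
              simp only [og, Option.some.injEq] at h1
              have h0 : g k 0 = R (h i) := (hg1 k).2.2.2.2 (R (h i)) rfl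
              have : ax k = 0 :=
                (hg1 k).2.1 (ax k) (by rw [hsl]; exact ha1 k) 0
                  (by rw [hsl]; omega) (by rw [h0, ← h1])
              rcases (ha2 k).2 with h' | h' <;> omega
        exact (Set.infinite_of_injective_forall_mem hinj ha3) hBadFin
      obtain ⟨k, hk⟩ := hk
      refine ⟨g k, hupd (g k) (hg1 k) ?_ ?_⟩
      · intro a ha
        exact hA (hg3 k a (by rw [hsl]; exact ha))
      · intro a ha hnp
        have hnb := hk a ha hnp
        constructor
        · intro hmem'
          exact hnb (Set.mem_union_left _ hmem')
        · intro j hj b hb he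
          apply hnb
          apply Set.mem_union_right
          rw [he]
          exact Set.mem_biUnion (Finset.mem_coe.2 (Finset.mem_range.2 hj))
            (Set.mem_image_of_mem _ hb)
    · -- hitting-set case is impossible here
      exfalso
      obtain ⟨a, ha, hmemA, hnpins⟩ := hhit pstar hpseg hguard
      have haZ : pstar a ∈ Z := hA hmemA
      obtain ⟨j, hj⟩ := hgap (st + a) haZ
      have hale : a ≤ leng h m - 1 := by rw [hsl] at ha; omega
      have hjm : h j ≤ h m := by omega
      have hjlem : j ≤ m := hmono.le_iff_le.1 hjm
      have hnv : pstar a ≠ vg R h m := fun hc => hnpins (Set.mem_insert_iff.2 (Or.inl hc))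
      have : st + a ≠ h m := by
        intro hc
        exact hnv (by show R (st + a) = R (h m); rw [hc])
      have hjltm : j < m := by
        rcases Nat.lt_or_ge j m with h' | h'
        · exact h'
        · exfalso
          have hjm' : m ≤ j := h'
          have : h m ≤ h j := hmono.le_iff_le.2 hjm'
          have : j = m := by omega
          omega
      have hm0 : m ≠ 0 := by omega
      obtain ⟨i0, hm⟩ : ∃ i0, m = i0 + 1 := ⟨m - 1, by omega⟩
      have hsti : st = h i0 := by rw [hst, hm]; rfl
      have h1 : h i0 ≤ h j := by omega
      have h2 : i0 ≤ j := hmono.le_iff_le.1 h1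
      have h3 : j = i0 := by omega
      have ha0 : a = 0 := by
        have : h j = h i0 := by rw [h3]
        omega
      apply hnpins
      apply Set.mem_insert_iff.2
      right
      show og R h m = some (pstar a)
      have hog : og R h m = some (R (h i0)) := by rw [hm]; rfl
      rw [hog, ha0]
      show some (R (h i0)) = some (R (st + 0))
      rw [hsti, Nat.add_zero]

noncomputable def Fchain (Y : Set X) (R : ℕ → X) (h : ℕ → ℕ) (hR : IsRay G R)
    (hfib : ∀ k, {n | L (R n) = k}.Finite)
    (hmono : StrictMono h) (hmem : ∀ i, R (h i) ∈ Zc G L Y)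
    (hgap : ∀ n, R n ∈ Zc G L Y → ∃ i, n = h i) :
    ∀ m : ℕ, {f : ℕ → ℕ → X // Invg G L (Zc G L Y) R h m f} := fun m =>
  Nat.rec ⟨fun _ _ => R 0, fun i hi => absurd hi (Nat.not_lt_zero i)⟩
    (fun m prev =>
      ⟨Function.update prev.1 m
          (step_ex G L Y R h hR hfib hmono hmem hgap m prev.1 prev.2).choose,
        (step_ex G L Y R h hR hfib hmono hmem hgap m prev.1 prev.2).choose_spec⟩) m

lemma Fchain_stab (Y : Set X) (R : ℕ → X) (h : ℕ → ℕ) (hR : IsRay G R)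
    (hfib : ∀ k, {n | L (R n) = k}.Finite)
    (hmono : StrictMono h) (hmem : ∀ i, R (h i) ∈ Zc G L Y)
    (hgap : ∀ n, R n ∈ Zc G L Y → ∃ i, n = h i) :
    ∀ m i, i < m →
      (Fchain G L Y R h hR hfib hmono hmem hgap m).1 i =
        (Fchain G L Y R h hR hfib hmono hmem hgap (i + 1)).1 i := by
  intro m
  induction m with
  | zero => omega
  | succ m ih =>
    intro i hi
    rcases Nat.lt_succ_iff_lt_or_eq.1 hi with hi' | rfl
    · have : (Fchain G L Y R h hR hfib hmono hmem hgap (m + 1)).1 i =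
          (Fchain G L Y R h hR hfib hmono hmem hgap m).1 i := by
        show Function.update _ m _ i = _
        exact Function.update_of_ne (by omega) _ _
      rw [this]; exact ih i hi'
    · rfl

lemma reroute (Y : Set X) (R : ℕ → X) (hR : IsRay G R)
    (hinf : {n : ℕ | R n ∈ Zc G L Y}.Infinite)
    (hfib : ∀ k : ℕ, {n : ℕ | L (R n) = k}.Finite) :
    ∃ R' : ℕ → X, IsRay G R' ∧ (∀ n, R' n ∈ Zc G L Y) ∧ L ∘ R' = L ∘ R := by
  classical
  set Z := Zc G L Y with hZdef
  set q : ℕ → Prop := fun n => R n ∈ Z with hq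
  have hinf' : (setOf q).Infinite := hinf
  set h : ℕ → ℕ := Nat.nth q with hh
  have hmono : StrictMono h := Nat.nth_strictMono hinf'
  have hmem : ∀ i, R (h i) ∈ Z := fun i => Nat.nth_mem_of_infinite hinf' i
  have hgap : ∀ n, R n ∈ Z → ∃ i, n = h i := fun n hn =>
    ⟨Nat.count q n, (Nat.nth_count hn).symm⟩
  set F := Fchain G L Y R h hR hfib hmono hmem hgap with hF
  set sg : ℕ → ℕ → X := fun i => (F (i + 1)).1 i with hsg
  have hstab : ∀ m i, i < m → (F m).1 i = sg i := by
    intro m i hi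
    exact Fchain_stab G L Y R h hR hfib hmono hmem hgap m i hi
  have hseg : ∀ i, SegPath G L (strg L R h i) (og R h i) (vg R h i) (sg i) :=
    fun i => ((F (i + 1)).2 i (Nat.lt_succ_self i)).1
  have hZm : ∀ i, ∀ a < leng h i, sg i a ∈ Z :=
    fun i => ((F (i + 1)).2 i (Nat.lt_succ_self i)).2.1
  have hNP : ∀ i, ∀ a, a < leng h i → NPidx h i a →
      sg i a ∉ Bg L R h i ∧ ∀ j < i, ∀ b < leng h j, sg i a ≠ sg j b := by
    intro i a ha hnp
    obtain ⟨_, _, c3⟩ := (F (i + 1)).2 i (Nat.lt_succ_self i)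
    obtain ⟨d1, d2⟩ := c3 a ha hnp
    refine ⟨d1, fun j hj b hb => ?_⟩
    have := d2 j hj b hb
    rwa [hstab (i + 1) j (by omega)] at this
  have hsa : ∀ i, startg h i + (leng h i - 1) = h i ∧ 1 ≤ leng h i ∧
      (i = 0 ∨ 2 ≤ leng h i) := startg_add h hmono
  have hsl : ∀ i, (strg L R h i).length = leng h i := strg_length L R h
  have hend : ∀ i, sg i (leng h i - 1) = R (h i) := by
    intro i
    have := (hseg i).2.2.2.1
    rwa [hsl i] at this
  have hbeg : ∀ i, sg (i + 1) 0 = R (h i) := fun i => (hseg (i + 1)).2.2.2.2 (R (h i)) rfl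
  have hlabel : ∀ i, ∀ a, a < leng h i → L (sg i a) = L (R (startg h i + a)) := by
    intro i a ha
    have := (hseg i).2.2.1 a (by rw [hsl i]; exact ha)
    rwa [strg_getD L R h ha] at this
  have hlen0 : leng h 0 = h 0 + 1 := by simp [leng, startg]
  have hlenS : ∀ i, leng h (i + 1) = h (i + 1) - h i + 1 := by intro i; simp [leng, startg]
  have hstart0 : startg h 0 = 0 := rfl
  have hstartS : ∀ i, startg h (i + 1) = h i := fun i => rfl
  -- position bookkeeping
  set idx : ℕ → ℕ := fun n => Nat.findGreatest (fun i => h i < n) n with hidx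
  set R' : ℕ → X := fun n => if n ≤ h 0 then sg 0 n else sg (idx n + 1) (n - h (idx n))
    with hR'
  have hidxle : ∀ n i, i ≤ n → h i < n → i ≤ idx n := by
    intro n i hle hp
    exact Nat.le_findGreatest (P := fun j => h j < n) hle hp
  have hidxbnd : ∀ n, idx n ≤ n := by
    intro n
    exact Nat.findGreatest_le (P := fun j => h j < n) n
  have hidx1 : ∀ n, h 0 < n → h (idx n) < n ∧ n ≤ h (idx n + 1) := by
    intro n hn
    have h1 : h (idx n) < n :=
      Nat.findGreatest_spec (P := fun j => h j < n) (m := 0) (Nat.zero_le n) hn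
    refine ⟨h1, ?_⟩
    by_contra hc
    push_neg at hc
    have h2a : idx n + 1 ≤ h (idx n + 1) := hmono.le_apply
    have h2 : idx n + 1 ≤ n := by omega
    have := hidxle n (idx n + 1) h2 hc
    omega
  have hrep : ∀ n, ∃ i a, R' n = sg i a ∧ n = startg h i + a ∧ a < leng h i ∧
      (i = 0 ∨ 1 ≤ a) := by
    intro n
    by_cases hn : n ≤ h 0
    · refine ⟨0, n, ?_, by omega, by omega, Or.inl rfl⟩
      rw [hR']; simp only [if_pos hn]
    · push_neg at hn
      obtain ⟨h1, h2⟩ := hidx1 n hn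
      have h3 : h (idx n) < h (idx n + 1) := hmono (Nat.lt_succ_self _)
      refine ⟨idx n + 1, n - h (idx n), ?_, ?_, ?_, Or.inr (by omega)⟩
      · rw [hR']; simp only [if_neg (by omega : ¬ n ≤ h 0)]
      · rw [hstartS]; omega
      · rw [hlenS]; omega
  have hrepinj : ∀ i a j b, a < leng h i → b < leng h j → (i = 0 ∨ 1 ≤ a) →
      (j = 0 ∨ 1 ≤ b) → sg i a = sg j b → startg h i + a = startg h j + b := by
    have key : ∀ i a j b, j < i → a < leng h i → b < leng h j → (i = 0 ∨ 1 ≤ a) →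
        (j = 0 ∨ 1 ≤ b) → sg i a = sg j b → False := by
      intro i a j b hji ha hb hsidei hsidej he
      by_cases hnp : NPidx h i a
      · exact (hNP i a ha hnp).2 j hji b hb he
      · have hnp' : a + 1 = leng h i := by
          by_cases ha1 : a + 1 = leng h i
          · exact ha1
          · exfalso
            apply hnp
            refine ⟨ha1, ?_⟩
            rcases hsidei with rfl | h1
            · exact Or.inl rfl
            · exact Or.inr (by omega)
        have hvi : sg i a = R (h i) := by
          have : a = leng h i - 1 := by omega
          rw [this]; exact hend i
        by_cases hnpj : NPidx h j b
        · apply (hNP j b hb hnpj).1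
          refine Set.mem_biUnion (Finset.mem_coe.2 (Finset.mem_range.2 hb)) ?_
          refine ⟨h i, ?_, ?_⟩
          · show L (R (h i)) = (strg L R h j).getD b 0
            have hlj := (hseg j).2.2.1 b (by rw [hsl j]; exact hb)
            rw [← hlj, ← he, hvi]
          · rw [← hvi]; exact he
        · have hbend : b + 1 = leng h j := by
            by_cases hb1 : b + 1 = leng h j
            · exact hb1
            · exfalso
              apply hnpj
              refine ⟨hb1, ?_⟩
              rcases hsidej with rfl | h1
              · exact Or.inl rfl
              · exact Or.inr (by omega)
          have hvj : sg j b = R (h j) := by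
            have : b = leng h j - 1 := by omega
            rw [this]; exact hend j
          have hij : h i = h j := hR.1 (by rw [← hvi, he, hvj])
          have := hmono.injective hij
          omega
    intro i a j b ha hb hsa' hsb' he
    rcases lt_trichotomy i j with h' | rfl | h'
    · exact (key j b i a h' hb ha hsb' hsa' he.symm).elim
    · have : a = b := (hseg i).2.1 a (by rw [hsl i]; exact ha) b (by rw [hsl i]; exact hb) he
      rw [this]
    · exact (key i a j b h' ha hb hsa' hsb' he).elim
  have hadj : ∀ n, G.Adj (R' n) (R' (n + 1)) := by
    intro n
    by_cases h1 : n + 1 ≤ h 0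
    · have h2 : n ≤ h 0 := by omega
      rw [hR']; simp only [if_pos h1, if_pos h2]
      exact (hseg 0).1 n (by rw [hsl 0, hlen0]; omega)
    · push_neg at h1
      by_cases h2 : n ≤ h 0
      · have hn : n = h 0 := by omega
        have hidx0 : idx (n + 1) = 0 := by
          have hfg := (hidx1 (n + 1) (by omega)).1
          by_contra hc
          have h3 : 1 ≤ idx (n + 1) := by omega
          have h4 : h 1 ≤ h (idx (n + 1)) := hmono.le_iff_le.2 h3
          have h5 : h 0 < h 1 := hmono Nat.zero_lt_one
          omega
        rw [hR']
        simp only [if_pos h2, if_neg (show ¬ n + 1 ≤ h 0 by omega)]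
        rw [hidx0, hn]
        have e1 : sg 0 (h 0) = R (h 0) := by
          have := hend 0
          rwa [hlen0, Nat.add_sub_cancel] at this
        have e2 : h 0 + 1 - h 0 = 1 := by omega
        rw [e1, e2, ← hbeg 0]
        apply (hseg 1).1 0
        rw [hsl 1, hlenS 0]
        have : h 0 < h 1 := hmono Nat.zero_lt_one
        have hz : h (0 + 1) = h 1 := rfl
        omega
      · push_neg at h2
        obtain ⟨g1, g2⟩ := hidx1 n h2
        by_cases h3 : n < h (idx n + 1)
        · have hidxn1 : idx (n + 1) = idx n := by
            have hb' := (hidx1 (n + 1) (by omega)).1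
            have hlt : h (idx (n + 1)) < h (idx n + 1) := by omega
            have hlt2 := hmono.lt_iff_lt.1 hlt
            have ha' : idx n ≤ idx (n + 1) :=
              hidxle (n + 1) (idx n) (by have := hidxbnd n; omega) (by omega)
            omega
          rw [hR']
          simp only [if_neg (show ¬ n ≤ h 0 by omega),
            if_neg (show ¬ n + 1 ≤ h 0 by omega)]
          rw [hidxn1]
          have e : n + 1 - h (idx n) = (n - h (idx n)) + 1 := by omega
          rw [e]
          apply (hseg (idx n + 1)).1
          rw [hsl, hlenS]
          omega
        · have hn : n = h (idx n + 1) := by omega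
          have hidxn1 : idx (n + 1) = idx n + 1 := by
            have hb' := (hidx1 (n + 1) (by omega)).1
            have ha' : idx n + 1 ≤ idx (n + 1) :=
              hidxle (n + 1) (idx n + 1) (by have := hidxbnd n; omega) (by omega)
            have hle : h (idx (n + 1)) ≤ h (idx n + 1) := by omega
            have := hmono.le_iff_le.1 hle
            omega
          rw [hR']
          simp only [if_neg (show ¬ n ≤ h 0 by omega),
            if_neg (show ¬ n + 1 ≤ h 0 by omega)]
          rw [hidxn1]
          have e1 : sg (idx n + 1) (n - h (idx n)) = R (h (idx n + 1)) := by
            have hl : n - h (idx n) = leng h (idx n + 1) - 1 := by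
              rw [hlenS]; omega
            rw [hl]; exact hend (idx n + 1)
          have e2 : n + 1 - h (idx n + 1) = 1 := by omega
          rw [e1, e2, ← hbeg (idx n + 1)]
          apply (hseg (idx n + 2)).1 0
          rw [hsl, hlenS]
          have : h (idx n + 1) < h (idx n + 2) := hmono (by omega)
          have hz : h (idx n + 1 + 1) = h (idx n + 2) := rfl
          omega
  have hinj : Function.Injective R' := by
    intro mth nth he
    obtain ⟨i, a, e1, e2, e3, e4⟩ := hrep mth
    obtain ⟨j, b, f1, f2, f3, f4⟩ := hrep nth
    rw [e1, f1] at he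
    have := hrepinj i a j b e3 f3 e4 f4 he
    omega
  refine ⟨R', ⟨hinj, hadj⟩, ?_, ?_⟩
  · intro n
    obtain ⟨i, a, e1, _, e3, _⟩ := hrep n
    rw [e1]
    exact hZm i a e3
  · funext n
    obtain ⟨i, a, e1, e2, e3, _⟩ := hrep n
    show L (R' n) = L (R n)
    rw [e1, hlabel i a e3, ← e2]

end Stmt14Aux

/-- For every `Y ⊆ X` and labelling `L` there is `Z ⊇ Y` of the same cardinality such
that every ray meeting `Z` infinitely often whose labels tend to infinity can be replaced
by a ray inside `Z` with the same label sequence. -/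
theorem stmt14 {X : Type} (G : SimpleGraph X) (Y : Set X) (L : X → ℕ) :
    ∃ Z : Set X, Y ⊆ Z ∧ #Z = #Y ∧
      ∀ R : ℕ → X, IsRay G R → {n : ℕ | R n ∈ Z}.Infinite →
        (∀ k : ℕ, {n : ℕ | L (R n) = k}.Finite) →
        ∃ R' : ℕ → X, IsRay G R' ∧ (∀ n, R' n ∈ Z) ∧ L ∘ R' = L ∘ R := by
  classical
  by_cases hY : Y.Finite
  · refine ⟨Y, subset_rfl, rfl, ?_⟩
    intro R hR hinf hfib
    exfalso
    have hfin : {n : ℕ | R n ∈ Y}.Finite :=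
      Set.Finite.preimage (hR.1.injOn) hY
    exact hinf hfin
  · refine ⟨Zc G L Y, subset_Zc G L Y, mk_Zc G L Y hY, ?_⟩
    intro R hR hinf hfib
    exact reroute G L Y R hR hinf hfib
end
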